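/- arXiv:1301.4877 — 13 statements merged into one kernel-verified Lean document; each statement's English description precedes it below -/
import Mathlib

section
/- For every nonnegative integer n, the number (2n-1)·C(3n,n) divides the sum ∑_{k=0}^{n} C(6k,3k)·C(3k,k)·C(6(n-k),3(n-k))·C(3(n-k),n-k); equivalently, s_n := (1/((2n-1)·C(3n,n))) · ∑_{k=0}^{n} C(6k,3k)·C(3k,k)·C(6(n-k),3(n-k))·C(3(n-k),n-k) is an integer. -/
/-
  Proof sketch: write n = k + j.  We show the *termwise* divisibility
  (2n-1)·C(3n,n) ∣ C(6k,3k)·C(3k,k)·C(6j,3j)·C(3j,j),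
  by comparing p-adic valuations via Kummer's theorem (carry counts).
  Per digit-level q = p^i, with K = k%q, J = j%q, the carry indicators satisfy
  B + B' + γ = C + δ + ε  (an exact identity), γ ≤ A + A', and whenever
  q ∣ 2n-1 (q ≥ 5) additionally γ + 1 ≤ A + A' + δ + ε.  For p = 3 a shifted
  pairing (level i ↔ i+1) is used instead.
-/

private lemma modlt2 {q x : ℕ} (h : x < 2 * q) :
    x % q = if q ≤ x then x - q else x := by
  split_ifs with h1
  · rw [Nat.mod_eq_sub_mod h1]; exact Nat.mod_eq_of_lt (by omega)
  · exact Nat.mod_eq_of_lt (by omega)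

private lemma mulmod (c k q : ℕ) : (c * k) % q = (c * (k % q)) % q := by
  conv_lhs => rw [← Nat.mod_add_div k q]
  rw [Nat.mul_add, show c * (q * (k / q)) = c * (k / q) * q from by ring,
    Nat.add_mul_mod_self_right]

/-- per-level identity: B + B' + γ = C + δ + ε -/
private lemma L_id {q K J : ℕ} (hq : 0 < q) (hK : K < q) (hJ : J < q) :
    (if q ≤ K + (2 * K) % q then (1:ℕ) else 0) + (if q ≤ J + (2 * J) % q then (1:ℕ) else 0) +
      (if q ≤ (3 * K) % q + (3 * J) % q then (1:ℕ) else 0) =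
    (if q ≤ (K + J) % q + (2 * K + 2 * J) % q then (1:ℕ) else 0) +
      (if q ≤ K + J then (1:ℕ) else 0) +
      (if q ≤ (2 * K) % q + (2 * J) % q then (1:ℕ) else 0) := by
  have d1 := Nat.add_div (a := K) (b := 2 * K) hq
  have d2 := Nat.add_div (a := J) (b := 2 * J) hq
  have d3 := Nat.add_div (a := K) (b := J) hq
  have d4 := Nat.add_div (a := 2 * K) (b := 2 * J) hq
  have d5 := Nat.add_div (a := K + J) (b := 2 * K + 2 * J) hq
  have d6 := Nat.add_div (a := 3 * K) (b := 3 * J) hq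
  rw [Nat.mod_eq_of_lt hK] at d1 d3
  rw [Nat.mod_eq_of_lt hJ] at d2 d3
  rw [show K + 2 * K = 3 * K by ring] at d1
  rw [show J + 2 * J = 3 * J by ring] at d2
  rw [show K + J + (2 * K + 2 * J) = 3 * K + 3 * J by ring] at d5
  rw [Nat.div_eq_of_lt hK] at d1 d3
  rw [Nat.div_eq_of_lt hJ] at d2 d3
  set t1 := (if q ≤ K + (2 * K) % q then (1:ℕ) else 0) with ht1
  set t2 := (if q ≤ J + (2 * J) % q then (1:ℕ) else 0) with ht2
  set t3 := (if q ≤ K + J then (1:ℕ) else 0) with ht3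
  set t4 := (if q ≤ (2 * K) % q + (2 * J) % q then (1:ℕ) else 0) with ht4
  set t5 := (if q ≤ (K + J) % q + (2 * K + 2 * J) % q then (1:ℕ) else 0) with ht5
  set t6 := (if q ≤ (3 * K) % q + (3 * J) % q then (1:ℕ) else 0) with ht6
  omega

/-- γ ≤ A + A' -/
private lemma L_m1 (q K J : ℕ) :
    (if q ≤ (3 * K) % q + (3 * J) % q then (1:ℕ) else 0) ≤
      (if q ≤ (3 * K) % q + (3 * K) % q then (1:ℕ) else 0) +
      (if q ≤ (3 * J) % q + (3 * J) % q then (1:ℕ) else 0) := by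
  split_ifs <;> omega

/-- γ + 1 ≤ A + A' + δ + ε when q ∣ 2n-1 (q ≥ 5) -/
private lemma L_plus2 {q K J : ℕ} (hq5 : 5 ≤ q) (hK : K < q) (hJ : J < q)
    (h1 : (2 * K + 2 * J) % q = 1) :
    (if q ≤ (3 * K) % q + (3 * J) % q then (1:ℕ) else 0) + 1 ≤
      (if q ≤ (3 * K) % q + (3 * K) % q then (1:ℕ) else 0) +
      (if q ≤ (3 * J) % q + (3 * J) % q then (1:ℕ) else 0) +
      (if q ≤ K + J then (1:ℕ) else 0) +
      (if q ≤ (2 * K) % q + (2 * J) % q then (1:ℕ) else 0) := by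
  by_cases hδ : q ≤ K + J
  · have hm := L_m1 q K J
    split_ifs at hm ⊢ <;> omega
  · have h2 : (2 * K + 2 * J) % q = if q ≤ 2 * K + 2 * J then 2 * K + 2 * J - q
        else 2 * K + 2 * J := modlt2 (by omega)
    rw [h2] at h1
    have heq : 2 * K + 2 * J = q + 1 := by split_ifs at h1 <;> omega
    by_cases h2K : q ≤ 2 * K
    · have hJ0 : J = 0 := by omega
      subst hJ0
      have e3K : (3 * K) % q = 3 * K - q := by
        rw [Nat.mod_eq_sub_mod (by omega)]
        exact Nat.mod_eq_of_lt (by omega)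
      rw [e3K]
      rw [Nat.mul_zero 3, Nat.zero_mod]
      split_ifs <;> omega
    · by_cases h2J : q ≤ 2 * J
      · have hK0 : K = 0 := by omega
        subst hK0
        have e3J : (3 * J) % q = 3 * J - q := by
          rw [Nat.mod_eq_sub_mod (by omega)]
          exact Nat.mod_eq_of_lt (by omega)
        rw [e3J]
        rw [Nat.mul_zero 3, Nat.zero_mod]
        split_ifs <;> omega
      · have e2K : (2 * K) % q = 2 * K := Nat.mod_eq_of_lt (by omega)
        have e2J : (2 * J) % q = 2 * J := Nat.mod_eq_of_lt (by omega)
        rw [e2K, e2J]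
        have hm := L_m1 q K J
        split_ifs at hm ⊢ <;> omega

/-- the p = 3 shifted per-level estimate: 1 ≤ ε + [q ≤ 2K] + [q ≤ 2J] -/
private lemma L_P3 {q K J : ℕ} (hK : K < q) (hJ : J < q)
    (h1 : (2 * K + 2 * J) % q = 1) :
    1 ≤ (if q ≤ (2 * K) % q + (2 * J) % q then (1:ℕ) else 0) +
        ((if q ≤ 2 * K then (1:ℕ) else 0) + (if q ≤ 2 * J then (1:ℕ) else 0)) := by
  by_cases h2K : q ≤ 2 * K
  · split_ifs <;> omega
  · by_cases h2J : q ≤ 2 * J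
    · split_ifs <;> omega
    · have e2K : (2 * K) % q = 2 * K := Nat.mod_eq_of_lt (by omega)
      have e2J : (2 * J) % q = 2 * J := Nat.mod_eq_of_lt (by omega)
      have h2 : (2 * K + 2 * J) % q = if q ≤ 2 * K + 2 * J then 2 * K + 2 * J - q
          else 2 * K + 2 * J := modlt2 (by omega)
      rw [h2] at h1
      have heq : 2 * K + 2 * J = q + 1 := by split_ifs at h1 <;> omega
      rw [e2K, e2J]
      split_ifs <;> omega

/-- The key per-prime valuation inequality. -/
private lemma key_prime (p : ℕ) (hp : p.Prime) (k j : ℕ) (h1n : 1 ≤ k + j) :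
    (2 * (k + j) - 1).factorization p + ((3 * (k + j)).choose (k + j)).factorization p ≤
      ((6 * k).choose (3 * k)).factorization p + ((3 * k).choose k).factorization p +
      (((6 * j).choose (3 * j)).factorization p + ((3 * j).choose j).factorization p) := by
  haveI : Fact p.Prime := ⟨hp⟩
  have hp1 : 1 < p := hp.one_lt
  set n := k + j with hnkj
  set M := 6 * n + 1 with hM
  have hqpos : ∀ i : ℕ, 0 < p ^ i := fun i => pow_pos (by omega) i
  have hKlt : ∀ (x i : ℕ), x % p ^ i < p ^ i := fun x i => Nat.mod_lt _ (hqpos i)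
  -- mod normalizations
  have e3 : ∀ (x i : ℕ), (3 * x) % p ^ i = (3 * (x % p ^ i)) % p ^ i := fun x i =>
    mulmod 3 x (p ^ i)
  have e2 : ∀ (x i : ℕ), (2 * x) % p ^ i = (2 * (x % p ^ i)) % p ^ i := fun x i =>
    mulmod 2 x (p ^ i)
  have en : ∀ i : ℕ, n % p ^ i = (k % p ^ i + j % p ^ i) % p ^ i := fun i =>
    Nat.add_mod k j (p ^ i)
  have e2n : ∀ i : ℕ, (2 * n) % p ^ i =
      (2 * (k % p ^ i) + 2 * (j % p ^ i)) % p ^ i := by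
    intro i
    rw [hnkj, show 2 * (k + j) = 2 * k + 2 * j from by ring, Nat.add_mod (2 * k),
      e2 k i, e2 j i, ← Nat.add_mod]
  -- Kummer for the five binomials
  have hck : ((6 * k).choose (3 * k)).factorization p =
      ∑ i ∈ Finset.Ico 1 M, (if p ^ i ≤ (3 * (k % p ^ i)) % p ^ i +
        (3 * (k % p ^ i)) % p ^ i then (1:ℕ) else 0) := by
    rw [Nat.factorization_def _ hp, padicValNat_choose (p := p) (b := M) (by omega)
      (lt_of_le_of_lt (Nat.log_le_self p (6 * k)) (by omega))]
    rw [Finset.card_filter]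
    refine Finset.sum_congr rfl fun i _ => ?_
    rw [show 6 * k - 3 * k = 3 * k from by omega, e3 k i]
  have hbk : ((3 * k).choose k).factorization p =
      ∑ i ∈ Finset.Ico 1 M, (if p ^ i ≤ k % p ^ i +
        (2 * (k % p ^ i)) % p ^ i then (1:ℕ) else 0) := by
    rw [Nat.factorization_def _ hp, padicValNat_choose (p := p) (b := M) (by omega)
      (lt_of_le_of_lt (Nat.log_le_self p (3 * k)) (by omega))]
    rw [Finset.card_filter]
    refine Finset.sum_congr rfl fun i _ => ?_
    rw [show 3 * k - k = 2 * k from by omega, e2 k i]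
  have hcj : ((6 * j).choose (3 * j)).factorization p =
      ∑ i ∈ Finset.Ico 1 M, (if p ^ i ≤ (3 * (j % p ^ i)) % p ^ i +
        (3 * (j % p ^ i)) % p ^ i then (1:ℕ) else 0) := by
    rw [Nat.factorization_def _ hp, padicValNat_choose (p := p) (b := M) (by omega)
      (lt_of_le_of_lt (Nat.log_le_self p (6 * j)) (by omega))]
    rw [Finset.card_filter]
    refine Finset.sum_congr rfl fun i _ => ?_
    rw [show 6 * j - 3 * j = 3 * j from by omega, e3 j i]
  have hbj : ((3 * j).choose j).factorization p =
      ∑ i ∈ Finset.Ico 1 M, (if p ^ i ≤ j % p ^ i +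
        (2 * (j % p ^ i)) % p ^ i then (1:ℕ) else 0) := by
    rw [Nat.factorization_def _ hp, padicValNat_choose (p := p) (b := M) (by omega)
      (lt_of_le_of_lt (Nat.log_le_self p (3 * j)) (by omega))]
    rw [Finset.card_filter]
    refine Finset.sum_congr rfl fun i _ => ?_
    rw [show 3 * j - j = 2 * j from by omega, e2 j i]
  have hcn : ((3 * n).choose n).factorization p =
      ∑ i ∈ Finset.Ico 1 M, (if p ^ i ≤ (k % p ^ i + j % p ^ i) % p ^ i +
        (2 * (k % p ^ i) + 2 * (j % p ^ i)) % p ^ i then (1:ℕ) else 0) := by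
    rw [Nat.factorization_def _ hp, padicValNat_choose (p := p) (b := M) (by omega)
      (lt_of_le_of_lt (Nat.log_le_self p (3 * n)) (by omega))]
    rw [Finset.card_filter]
    refine Finset.sum_congr rfl fun i _ => ?_
    rw [show 3 * n - n = 2 * n from by omega, en i, e2n i]
  set a := (2 * n - 1).factorization p with ha
  have h2n0 : 2 * n - 1 ≠ 0 := by omega
  have haM : a + 2 ≤ M := by
    have := Nat.factorization_lt (n := 2 * n - 1) p h2n0
    omega
  have hdvd_a : ∀ i : ℕ, i ≤ a → p ^ i ∣ 2 * n - 1 := fun i hia =>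
    (Nat.Prime.pow_dvd_iff_le_factorization hp h2n0).2 hia
  -- whenever p^i ∣ 2n - 1 the residues satisfy (2K + 2J) % q = 1
  have hone : ∀ i : ℕ, 1 ≤ i → p ^ i ∣ 2 * n - 1 →
      (2 * (k % p ^ i) + 2 * (j % p ^ i)) % p ^ i = 1 := by
    intro i hi hd
    obtain ⟨t, ht⟩ := hd
    have hq1 : 1 < p ^ i := by
      calc 1 < p := hp1
      _ ≤ p ^ i := Nat.le_self_pow (by omega) p
    rw [← e2n i, show 2 * n = p ^ i * t + 1 from by omega, Nat.mul_add_mod,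
      Nat.mod_eq_of_lt hq1]
  -- pass to indicator sums
  rw [hck, hbk, hcj, hbj, hcn]
  -- auxiliary sums
  set SA := ∑ i ∈ Finset.Ico 1 M, (if p ^ i ≤ (3 * (k % p ^ i)) % p ^ i +
    (3 * (k % p ^ i)) % p ^ i then (1:ℕ) else 0) with hSA
  set SB := ∑ i ∈ Finset.Ico 1 M, (if p ^ i ≤ k % p ^ i +
    (2 * (k % p ^ i)) % p ^ i then (1:ℕ) else 0) with hSB
  set SA' := ∑ i ∈ Finset.Ico 1 M, (if p ^ i ≤ (3 * (j % p ^ i)) % p ^ i +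
    (3 * (j % p ^ i)) % p ^ i then (1:ℕ) else 0) with hSA'
  set SB' := ∑ i ∈ Finset.Ico 1 M, (if p ^ i ≤ j % p ^ i +
    (2 * (j % p ^ i)) % p ^ i then (1:ℕ) else 0) with hSB'
  set SC := ∑ i ∈ Finset.Ico 1 M, (if p ^ i ≤ (k % p ^ i + j % p ^ i) % p ^ i +
    (2 * (k % p ^ i) + 2 * (j % p ^ i)) % p ^ i then (1:ℕ) else 0) with hSC
  set Sδ := ∑ i ∈ Finset.Ico 1 M,
    (if p ^ i ≤ k % p ^ i + j % p ^ i then (1:ℕ) else 0) with hSδ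
  set Sε := ∑ i ∈ Finset.Ico 1 M, (if p ^ i ≤ (2 * (k % p ^ i)) % p ^ i +
    (2 * (j % p ^ i)) % p ^ i then (1:ℕ) else 0) with hSε
  set Sγ := ∑ i ∈ Finset.Ico 1 M, (if p ^ i ≤ (3 * (k % p ^ i)) % p ^ i +
    (3 * (j % p ^ i)) % p ^ i then (1:ℕ) else 0) with hSγ
  -- summed identity : SB + SB' + Sγ = SC + Sδ + Sε
  have hId : SB + SB' + Sγ = SC + Sδ + Sε := by
    rw [hSB, hSB', hSγ, hSC, hSδ, hSε, ← Finset.sum_add_distrib, ← Finset.sum_add_distrib,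
      ← Finset.sum_add_distrib, ← Finset.sum_add_distrib]
    exact Finset.sum_congr rfl fun i _ => L_id (hqpos i) (hKlt k i) (hKlt j i)
  by_cases hp3 : p = 3
  · -- p = 3 : shifted-level argument
    subst hp3
    -- γ_(i+1) = δ_i  and  γ_1 = 0, hence Sγ ≤ Sδ
    have hsh : ∀ x i : ℕ, (3 * (x % 3 ^ (i + 1))) % 3 ^ (i + 1) = 3 * (x % 3 ^ i) := by
      intro x i
      have hpow : (3:ℕ) ^ (i + 1) = 3 * 3 ^ i := by rw [pow_succ]; ring
      rw [hpow, Nat.mul_mod_mul_left, Nat.mod_mod_of_dvd x ⟨3, by ring⟩]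
    have hγδ : Sγ ≤ Sδ := by
      rw [hSγ, hSδ, Finset.sum_eq_sum_Ico_succ_bot (show 1 < M by omega)]
      have hg1 : (if (3:ℕ) ^ 1 ≤ (3 * (k % 3 ^ 1)) % 3 ^ 1 + (3 * (j % 3 ^ 1)) % 3 ^ 1
          then (1:ℕ) else 0) = 0 := by
        rw [if_neg]
        rw [pow_one, Nat.mul_mod_right, Nat.mul_mod_right]
        omega
      rw [hg1, zero_add]
      calc ∑ i ∈ Finset.Ico 2 M, (if 3 ^ i ≤ (3 * (k % 3 ^ i)) % 3 ^ i +
            (3 * (j % 3 ^ i)) % 3 ^ i then (1:ℕ) else 0)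
          = ∑ r ∈ Finset.range (M - 2), (if 3 ^ (1 + r) ≤ k % 3 ^ (1 + r) + j % 3 ^ (1 + r)
            then (1:ℕ) else 0) := by
            rw [Finset.sum_Ico_eq_sum_range]
            refine Finset.sum_congr rfl fun r _ => ?_
            have h2r : 2 + r = (1 + r) + 1 := by omega
            rw [h2r, hsh k (1 + r), hsh j (1 + r)]
            refine if_congr ?_ rfl rfl
            rw [pow_succ]
            omega
        _ = ∑ i ∈ Finset.Ico 1 (M - 1), (if 3 ^ i ≤ k % 3 ^ i + j % 3 ^ i
            then (1:ℕ) else 0) := by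
            rw [Finset.sum_Ico_eq_sum_range, show M - 1 - 1 = M - 2 from by omega]
        _ ≤ Sδ := by
            rw [hSδ]
            exact Finset.sum_le_sum_of_subset (Finset.Ico_subset_Ico le_rfl (by omega))
    -- a ≤ SA + SA' + Sε
    have hA : a ≤ SA + SA' + Sε := by
      have hstep : ∀ i ∈ Finset.Ico 1 (a + 1), (1:ℕ) ≤
          (if 3 ^ i ≤ (2 * (k % 3 ^ i)) % 3 ^ i + (2 * (j % 3 ^ i)) % 3 ^ i
            then (1:ℕ) else 0) +
          ((if 3 ^ (i + 1) ≤ (3 * (k % 3 ^ (i + 1))) % 3 ^ (i + 1) +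
              (3 * (k % 3 ^ (i + 1))) % 3 ^ (i + 1) then (1:ℕ) else 0) +
           (if 3 ^ (i + 1) ≤ (3 * (j % 3 ^ (i + 1))) % 3 ^ (i + 1) +
              (3 * (j % 3 ^ (i + 1))) % 3 ^ (i + 1) then (1:ℕ) else 0)) := by
        intro i hi
        rw [Finset.mem_Ico] at hi
        have h1 := hone i (by omega) (hdvd_a i (by omega))
        have hAk : (if (3:ℕ) ^ (i + 1) ≤ (3 * (k % 3 ^ (i + 1))) % 3 ^ (i + 1) +
            (3 * (k % 3 ^ (i + 1))) % 3 ^ (i + 1) then (1:ℕ) else 0) =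
            (if 3 ^ i ≤ 2 * (k % 3 ^ i) then (1:ℕ) else 0) := by
          rw [hsh k i]
          refine if_congr ?_ rfl rfl
          rw [pow_succ]
          omega
        have hAj : (if (3:ℕ) ^ (i + 1) ≤ (3 * (j % 3 ^ (i + 1))) % 3 ^ (i + 1) +
            (3 * (j % 3 ^ (i + 1))) % 3 ^ (i + 1) then (1:ℕ) else 0) =
            (if 3 ^ i ≤ 2 * (j % 3 ^ i) then (1:ℕ) else 0) := by
          rw [hsh j i]
          refine if_congr ?_ rfl rfl
          rw [pow_succ]
          omega
        rw [hAk, hAj]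
        exact L_P3 (hKlt k i) (hKlt j i) h1
      have hcalc : a = ∑ i ∈ Finset.Ico 1 (a + 1), (1:ℕ) := by simp
      have h2 : a ≤ ∑ i ∈ Finset.Ico 1 (a + 1),
          ((if 3 ^ i ≤ (2 * (k % 3 ^ i)) % 3 ^ i + (2 * (j % 3 ^ i)) % 3 ^ i
            then (1:ℕ) else 0) +
          ((if 3 ^ (i + 1) ≤ (3 * (k % 3 ^ (i + 1))) % 3 ^ (i + 1) +
              (3 * (k % 3 ^ (i + 1))) % 3 ^ (i + 1) then (1:ℕ) else 0) +
           (if 3 ^ (i + 1) ≤ (3 * (j % 3 ^ (i + 1))) % 3 ^ (i + 1) +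
              (3 * (j % 3 ^ (i + 1))) % 3 ^ (i + 1) then (1:ℕ) else 0))) := by
        exact le_trans (le_of_eq hcalc) (Finset.sum_le_sum hstep)
      rw [Finset.sum_add_distrib, Finset.sum_add_distrib] at h2
      have hε : ∑ i ∈ Finset.Ico 1 (a + 1), (if 3 ^ i ≤ (2 * (k % 3 ^ i)) % 3 ^ i +
          (2 * (j % 3 ^ i)) % 3 ^ i then (1:ℕ) else 0) ≤ Sε := by
        rw [hSε]
        exact Finset.sum_le_sum_of_subset (Finset.Ico_subset_Ico le_rfl (by omega))
      have hAs : ∑ i ∈ Finset.Ico 1 (a + 1),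
          (if 3 ^ (i + 1) ≤ (3 * (k % 3 ^ (i + 1))) % 3 ^ (i + 1) +
            (3 * (k % 3 ^ (i + 1))) % 3 ^ (i + 1) then (1:ℕ) else 0) ≤ SA := by
        have : ∑ i ∈ Finset.Ico 1 (a + 1),
            (if 3 ^ (i + 1) ≤ (3 * (k % 3 ^ (i + 1))) % 3 ^ (i + 1) +
              (3 * (k % 3 ^ (i + 1))) % 3 ^ (i + 1) then (1:ℕ) else 0) =
            ∑ i ∈ Finset.Ico 2 (a + 2), (if 3 ^ i ≤ (3 * (k % 3 ^ i)) % 3 ^ i +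
              (3 * (k % 3 ^ i)) % 3 ^ i then (1:ℕ) else 0) := by
          rw [Finset.sum_Ico_eq_sum_range, Finset.sum_Ico_eq_sum_range,
            show a + 1 - 1 = a + 2 - 2 from by omega]
          refine Finset.sum_congr rfl fun r _ => ?_
          rw [show 1 + r + 1 = 2 + r from by omega]
        rw [this, hSA]
        refine Finset.sum_le_sum_of_subset ?_
        intro x hx
        rw [Finset.mem_Ico] at hx ⊢
        omega
      have hAs' : ∑ i ∈ Finset.Ico 1 (a + 1),
          (if 3 ^ (i + 1) ≤ (3 * (j % 3 ^ (i + 1))) % 3 ^ (i + 1) +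
            (3 * (j % 3 ^ (i + 1))) % 3 ^ (i + 1) then (1:ℕ) else 0) ≤ SA' := by
        have : ∑ i ∈ Finset.Ico 1 (a + 1),
            (if 3 ^ (i + 1) ≤ (3 * (j % 3 ^ (i + 1))) % 3 ^ (i + 1) +
              (3 * (j % 3 ^ (i + 1))) % 3 ^ (i + 1) then (1:ℕ) else 0) =
            ∑ i ∈ Finset.Ico 2 (a + 2), (if 3 ^ i ≤ (3 * (j % 3 ^ i)) % 3 ^ i +
              (3 * (j % 3 ^ i)) % 3 ^ i then (1:ℕ) else 0) := by
          rw [Finset.sum_Ico_eq_sum_range, Finset.sum_Ico_eq_sum_range,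
            show a + 1 - 1 = a + 2 - 2 from by omega]
          refine Finset.sum_congr rfl fun r _ => ?_
          rw [show 1 + r + 1 = 2 + r from by omega]
        rw [this, hSA']
        refine Finset.sum_le_sum_of_subset ?_
        intro x hx
        rw [Finset.mem_Ico] at hx ⊢
        omega
      omega
    omega
  · -- p ≠ 3 : pointwise argument
    have ha_card : a = ∑ i ∈ Finset.Ico 1 M, (if p ^ i ∣ 2 * n - 1 then (1:ℕ) else 0) := by
      rw [← Finset.card_filter]
      have hfeq : (Finset.Ico 1 M).filter (fun i => p ^ i ∣ 2 * n - 1) =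
          Finset.Ico 1 (a + 1) := by
        ext i
        simp only [Finset.mem_filter, Finset.mem_Ico]
        constructor
        · rintro ⟨⟨hi1, _⟩, hd⟩
          have := (Nat.Prime.pow_dvd_iff_le_factorization hp h2n0).1 hd
          omega
        · rintro ⟨hi1, hi2⟩
          exact ⟨⟨hi1, by omega⟩, hdvd_a i (by omega)⟩
      rw [hfeq]
      simp
    have hstar : a + Sγ ≤ SA + SA' + Sδ + Sε := by
      rw [ha_card, hSγ, hSA, hSA', hSδ, hSε, ← Finset.sum_add_distrib,
        ← Finset.sum_add_distrib, ← Finset.sum_add_distrib, ← Finset.sum_add_distrib]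
      refine Finset.sum_le_sum fun i hi => ?_
      rw [Finset.mem_Ico] at hi
      by_cases hd : p ^ i ∣ 2 * n - 1
      · rw [if_pos hd]
        have hpodd : p ≠ 2 := by
          rintro rfl
          have h2 : (2:ℕ) ∣ 2 * n - 1 := dvd_trans (dvd_pow_self 2 (by omega)) hd
          omega
        have hp5 : 5 ≤ p := by
          rcases Nat.lt_or_ge p 5 with h | h
          · interval_cases p
            · exact absurd rfl hpodd
            · exact absurd rfl hp3
            · exact absurd hp (by decide)
          · exact h
        have hq5 : 5 ≤ p ^ i := le_trans hp5 (Nat.le_self_pow (by omega) p)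
        have h1 := hone i (by omega) hd
        have hL := L_plus2 hq5 (hKlt k i) (hKlt j i) h1
        omega
      · rw [if_neg hd, zero_add]
        have hL := L_m1 (p ^ i) (k % p ^ i) (j % p ^ i)
        omega
    omega

/-- Termwise divisibility in ℕ. -/
private lemma term_dvd (n k j : ℕ) (hn : n = k + j) (h1 : 1 ≤ n) :
    (2 * n - 1) * ((3 * n).choose n) ∣
      (6 * k).choose (3 * k) * ((3 * k).choose k) *
        ((6 * j).choose (3 * j) * ((3 * j).choose j)) := by
  subst hn
  have hc0 : 0 < (3 * (k + j)).choose (k + j) := Nat.choose_pos (by omega)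
  have hc1 : 0 < (6 * k).choose (3 * k) := Nat.choose_pos (by omega)
  have hc2 : 0 < (3 * k).choose k := Nat.choose_pos (by omega)
  have hc3 : 0 < (6 * j).choose (3 * j) := Nat.choose_pos (by omega)
  have hc4 : 0 < (3 * j).choose j := Nat.choose_pos (by omega)
  have hd0 : (2 * (k + j) - 1) * ((3 * (k + j)).choose (k + j)) ≠ 0 := by
    have h2 : 0 < 2 * (k + j) - 1 := by omega
    positivity
  have hr0 : (6 * k).choose (3 * k) * ((3 * k).choose k) *
      ((6 * j).choose (3 * j) * ((3 * j).choose j)) ≠ 0 := by positivity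
  rw [← Nat.factorization_le_iff_dvd hd0 hr0]
  intro p
  by_cases hp : p.Prime
  · rw [Nat.factorization_mul (by omega) hc0.ne',
      Nat.factorization_mul (by positivity) (by positivity),
      Nat.factorization_mul hc1.ne' hc2.ne', Nat.factorization_mul hc3.ne' hc4.ne']
    simp only [Finsupp.coe_add, Pi.add_apply]
    exact key_prime p hp k j h1
  · simp [Nat.factorization_eq_zero_of_not_prime _ hp]

theorem sun_conjecture_divisibility (n : ℕ) :
    ((2 * (n : ℤ) - 1) * (Nat.choose (3 * n) n : ℤ)) ∣
      ∑ k ∈ Finset.range (n + 1),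
        ((Nat.choose (6 * k) (3 * k) : ℤ) * (Nat.choose (3 * k) k : ℤ) *
          (Nat.choose (6 * (n - k)) (3 * (n - k)) : ℤ) *
          (Nat.choose (3 * (n - k)) (n - k) : ℤ)) := by
  rcases Nat.eq_zero_or_pos n with rfl | hn
  · norm_num
  · have hcast : (2 * (n : ℤ) - 1) * (Nat.choose (3 * n) n : ℤ) =
        (((2 * n - 1) * Nat.choose (3 * n) n : ℕ) : ℤ) := by
      push_cast [Nat.cast_sub (show 1 ≤ 2 * n by omega)]
      ring
    rw [hcast]
    apply Finset.dvd_sum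
    intro k hk
    rw [Finset.mem_range] at hk
    have hterm := term_dvd n k (n - k) (by omega) hn
    have hInt := Int.natCast_dvd_natCast.mpr hterm
    refine hInt.trans (dvd_of_eq ?_)
    push_cast
    ring
end

section
/- For all integers n ≥ 0 and 0 ≤ k ≤ n, the number (2n-1)·C(3n,n) divides the single product C(6k,3k)·C(3k,k)·C(6(n-k),3(n-k))·C(3(n-k),n-k); that is, C(6k,3k)·C(3k,k)·C(6(n-k),3(n-k))·C(3(n-k),n-k) / ((2n-1)·C(3n,n)) is an integer. -/
open Nat Finset

/-- floor superadditivity -/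
lemma my_add_div_le (a b q : ℕ) (hq : 0 < q) : a / q + b / q ≤ (a + b) / q := by
  rw [Nat.le_div_iff_mul_le hq, add_mul]
  exact Nat.add_le_add (Nat.div_mul_le_self a q) (Nat.div_mul_le_self b q)

lemma my_div_add_le (a b q : ℕ) (hq : 0 < q) : (a + b) / q ≤ a / q + b / q + 1 := by
  have h1 : a < q * (a / q) + q := by
    conv_lhs => rw [← Nat.div_add_mod a q]
    exact Nat.add_lt_add_left (Nat.mod_lt _ hq) _
  have h2 : b < q * (b / q) + q := by
    conv_lhs => rw [← Nat.div_add_mod b q]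
    exact Nat.add_lt_add_left (Nat.mod_lt _ hq) _
  have : a + b < (a / q + b / q + 2) * q := by
    have : (a / q + b / q + 2) * q = (q * (a/q) + q) + (q * (b/q) + q) := by ring
    rw [this]; exact Nat.add_lt_add h1 h2
  have := (Nat.div_lt_iff_lt_mul hq).2 this
  omega

lemma H1 (q m : ℕ) (hq : 0 < q) : 3*m/q + 2*m/q + m/q ≤ 6*m/q := by
  have h1 : 3*m/q + 2*m/q ≤ (3*m + 2*m)/q := my_add_div_le _ _ _ hq
  have h2 : (3*m+2*m)/q + m/q ≤ (3*m+2*m+m)/q := my_add_div_le _ _ _ hq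
  have h3 : (3*m+2*m+m) = 6*m := by ring
  rw [h3] at h2
  omega

lemma H2 (q r : ℕ) (hq : 0 < q) (hr : r < q) (h6 : q ≤ 6*r) :
    3*r/q + 2*r/q + 1 ≤ 6*r/q := by
  have e2 := Nat.div_add_mod (2*r) q
  have l2 : (2*r) % q < q := Nat.mod_lt _ hq
  have b2 : 2*r/q < 2 := (Nat.div_lt_iff_lt_mul hq).2 (by omega)
  have e3 := Nat.div_add_mod (3*r) q
  have l3 : (3*r) % q < q := Nat.mod_lt _ hq
  have b3 : 3*r/q < 3 := (Nat.div_lt_iff_lt_mul hq).2 (by omega)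
  have e6 := Nat.div_add_mod (6*r) q
  have l6 : (6*r) % q < q := Nat.mod_lt _ hq
  have b6 : 6*r/q < 6 := (Nat.div_lt_iff_lt_mul hq).2 (by omega)
  generalize hA : 2*r/q = A at *
  generalize hB : 3*r/q = B at *
  generalize hC : 6*r/q = C at *
  generalize hU : (2*r) % q = U at *
  generalize hV : (3*r) % q = V at *
  generalize hW : (6*r) % q = W at *
  interval_cases A <;> interval_cases B <;> interval_cases C <;> omega

lemma H3 (q t : ℕ) (hq : 0 < q) : 3*t/q ≤ 2*t/q + t/q + 1 := by
  have h := my_div_add_le (2*t) t q hq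
  have h3 : 2*t + t = 3*t := by ring
  rw [h3] at h
  omega

lemma H4 (q t : ℕ) (hq : 2 ≤ q) (h3q : ¬ (3 ∣ q))
    (hsh : 2*(t) = q + 1 ∨ 2*t = 3*q + 1) : 3*t/q ≤ 2*t/q + t/q := by
  have hq0 : 0 < q := by omega
  have ht : t < 2*q := by omega
  have e1 := Nat.div_add_mod t q
  have l1 : t % q < q := Nat.mod_lt _ hq0
  have b1 : t/q < 2 := (Nat.div_lt_iff_lt_mul hq0).2 (by omega)
  have e2 := Nat.div_add_mod (2*t) q
  have l2 : (2*t) % q < q := Nat.mod_lt _ hq0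
  have b2 : 2*t/q < 4 := (Nat.div_lt_iff_lt_mul hq0).2 (by omega)
  have e3 := Nat.div_add_mod (3*t) q
  have l3 : (3*t) % q < q := Nat.mod_lt _ hq0
  have b3 : 3*t/q < 6 := (Nat.div_lt_iff_lt_mul hq0).2 (by omega)
  generalize hA : t/q = A at *
  generalize hB : 2*t/q = B at *
  generalize hC : 3*t/q = C at *
  generalize hU : t % q = U at *
  generalize hV : (2*t) % q = V at *
  generalize hW : (3*t) % q = W at *
  interval_cases A <;> interval_cases B <;> interval_cases C <;> omega

/-- reduced per-level inequality -/
lemma level_red (q r s δ : ℕ) (hq : 2 ≤ q) (hr : r < q) (hs : s < q)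
    (hδ : δ = 0 ∨ (δ = 1 ∧ ¬ (3 ∣ q) ∧ (2*(r+s) = q + 1 ∨ 2*(r+s) = 3*q + 1))) :
    δ + 3*(r+s)/q + (3*r/q + 2*r/q + r/q) + (3*s/q + 2*s/q + s/q) ≤
    6*r/q + 6*s/q + (2*(r+s)/q + (r+s)/q) := by
  have hq0 : 0 < q := by omega
  have hr0 : r / q = 0 := Nat.div_eq_of_lt hr
  have hs0 : s / q = 0 := Nat.div_eq_of_lt hs
  by_cases hsml : 6*r < q ∧ 6*s < q
  · -- everything is 0
    obtain ⟨h6r, h6s⟩ := hsml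
    have h3r : 3*r/q = 0 := Nat.div_eq_of_lt (by omega)
    have h2r : 2*r/q = 0 := Nat.div_eq_of_lt (by omega)
    have h3s : 3*s/q = 0 := Nat.div_eq_of_lt (by omega)
    have h2s : 2*s/q = 0 := Nat.div_eq_of_lt (by omega)
    have h3t : 3*(r+s)/q = 0 := Nat.div_eq_of_lt (by omega)
    have hδ0 : δ = 0 := by
      rcases hδ with h | ⟨h1, h2, h3⟩
      · exact h
      · rcases h3 with h3 | h3 <;> omega
    rw [h3r, h2r, h3s, h2s, h3t, hr0, hs0, hδ0]
    exact Nat.zero_le _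
  · -- at least one of 6r ≥ q, 6s ≥ q
    have hC : 3*(r+s)/q + δ ≤ 2*(r+s)/q + (r+s)/q + 1 := by
      rcases hδ with h | ⟨h1, h2, h3⟩
      · have h' := H3 q (r+s) hq0
        omega
      · have h' := H4 q (r+s) hq h2 h3
        omega
    rcases Nat.lt_or_ge (6*r) q with h6r | h6r
    · have h6s : q ≤ 6*s := by omega
      have hA := H1 q r hq0
      have hB := H2 q s hq0 hs h6s
      omega
    · have hA := H2 q r hq0 hr h6r
      have hB := H1 q s hq0
      omega

/-- per-level inequality, unreduced -/
lemma level (q k j δ : ℕ) (hq : 2 ≤ q)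
    (hδ : δ = 0 ∨ (δ = 1 ∧ ¬ (3 ∣ q) ∧ q ∣ (2*(k+j) - 1) ∧ 1 ≤ k + j)) :
    δ + 3*(k+j)/q + (3*k/q + 2*k/q + k/q) + (3*j/q + 2*j/q + j/q) ≤
    6*k/q + 6*j/q + (2*(k+j)/q + (k+j)/q) := by
  have hq0 : 0 < q := by omega
  obtain ⟨K, r, hk, hrq⟩ : ∃ K r, k = q*K + r ∧ r < q :=
    ⟨k/q, k%q, by rw [Nat.div_add_mod], Nat.mod_lt _ hq0⟩
  obtain ⟨J, s, hj, hsq⟩ : ∃ J s, j = q*J + s ∧ s < q :=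
    ⟨j/q, j%q, by rw [Nat.div_add_mod], Nat.mod_lt _ hq0⟩
  have d1 : k/q = K + r/q := by rw [hk, Nat.mul_add_div hq0]
  have d2 : 2*k/q = 2*K + 2*r/q := by
    rw [show 2*k = q*(2*K) + 2*r by rw [hk]; ring, Nat.mul_add_div hq0]
  have d3 : 3*k/q = 3*K + 3*r/q := by
    rw [show 3*k = q*(3*K) + 3*r by rw [hk]; ring, Nat.mul_add_div hq0]
  have d6 : 6*k/q = 6*K + 6*r/q := by
    rw [show 6*k = q*(6*K) + 6*r by rw [hk]; ring, Nat.mul_add_div hq0]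
  have e1 : j/q = J + s/q := by rw [hj, Nat.mul_add_div hq0]
  have e2 : 2*j/q = 2*J + 2*s/q := by
    rw [show 2*j = q*(2*J) + 2*s by rw [hj]; ring, Nat.mul_add_div hq0]
  have e3 : 3*j/q = 3*J + 3*s/q := by
    rw [show 3*j = q*(3*J) + 3*s by rw [hj]; ring, Nat.mul_add_div hq0]
  have e6 : 6*j/q = 6*J + 6*s/q := by
    rw [show 6*j = q*(6*J) + 6*s by rw [hj]; ring, Nat.mul_add_div hq0]
  have f1 : (k+j)/q = (K+J) + (r+s)/q := by
    rw [show k+j = q*(K+J) + (r+s) by rw [hk, hj]; ring, Nat.mul_add_div hq0]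
  have f2 : 2*(k+j)/q = 2*(K+J) + 2*(r+s)/q := by
    rw [show 2*(k+j) = q*(2*(K+J)) + 2*(r+s) by rw [hk, hj]; ring, Nat.mul_add_div hq0]
  have f3 : 3*(k+j)/q = 3*(K+J) + 3*(r+s)/q := by
    rw [show 3*(k+j) = q*(3*(K+J)) + 3*(r+s) by rw [hk, hj]; ring, Nat.mul_add_div hq0]
  have hred : δ + 3*(r+s)/q + (3*r/q + 2*r/q + r/q) + (3*s/q + 2*s/q + s/q) ≤
      6*r/q + 6*s/q + (2*(r+s)/q + (r+s)/q) := by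
    apply level_red q r s δ hq hrq hsq
    rcases hδ with h | ⟨h1, h2, h3, h4⟩
    · exact Or.inl h
    · refine Or.inr ⟨h1, h2, ?_⟩
      -- q ∣ 2*(k+j) - 1  →  shape of r+s
      have h2kj : 2*(k+j) = q*(2*(K+J)) + 2*(r+s) := by rw [hk, hj]; ring
      rcases Nat.eq_zero_or_pos (r+s) with ht0 | ht0
      · -- r+s = 0 : contradiction
        exfalso
        have hdd : q ∣ 2*(k+j) := by
          rw [h2kj, ht0]
          exact ⟨2*(K+J), by ring⟩
        have h1d : q ∣ 1 := by
          have := Nat.dvd_sub hdd h3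
          rwa [Nat.sub_sub_self (by omega)] at this
        have := Nat.le_of_dvd one_pos h1d
        omega
      · have hsplit : 2*(k+j) - 1 = q*(2*(K+J)) + (2*(r+s) - 1) := by omega
        have hdd : q ∣ q*(2*(K+J)) := ⟨2*(K+J), rfl⟩
        have hdt : q ∣ 2*(r+s) - 1 := by
          have := Nat.dvd_sub h3 hdd
          rwa [hsplit, Nat.add_sub_cancel_left] at this
        obtain ⟨c, hc⟩ := hdt
        have hcb : c < 4 := by
          have h4q : q*c < q*4 := by
            have : 2*(r+s) - 1 < 4*q := by omega
            omega
          exact Nat.lt_of_mul_lt_mul_left h4q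
        interval_cases c <;> omega
  omega

/-- `(2n-1) ∣ C(2n,n)` -/
lemma two_sub_one_dvd_centralBinom (m : ℕ) : (2*(m+1) - 1) ∣ Nat.centralBinom (m+1) := by
  have key := Nat.succ_mul_centralBinom_succ m
  have hco : (2*m+1).Coprime (m+1) := by
    rw [Nat.coprime_comm, two_mul, add_assoc, Nat.coprime_add_self_right,
        Nat.coprime_self_add_left]
    exact Nat.coprime_one_left m
  have hdvd : (2*m+1) ∣ (m+1) * Nat.centralBinom (m+1) := by
    rw [key]
    exact Dvd.dvd.mul_right (Dvd.dvd.mul_left dvd_rfl 2) _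
  have := (Nat.Coprime.dvd_of_dvd_mul_left hco hdvd)
  have h21 : 2*(m+1) - 1 = 2*m+1 := by omega
  rwa [h21]

lemma padic_choose (p : ℕ) [Fact p.Prime] {a b : ℕ} (h : b ≤ a) :
    padicValNat p (a.choose b) + padicValNat p (b !) + padicValNat p ((a-b) !) =
    padicValNat p (a !) := by
  have h1 : a.choose b * b ! * (a-b)! = a ! := Nat.choose_mul_factorial_mul_factorial h
  have h2 := congrArg (padicValNat p) h1
  rwa [padicValNat.mul (mul_ne_zero (Nat.choose_pos h).ne' (Nat.factorial_ne_zero b))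
        (Nat.factorial_ne_zero _),
      padicValNat.mul (Nat.choose_pos h).ne' (Nat.factorial_ne_zero b)] at h2

lemma key_three (k j : ℕ) (hn : 1 ≤ k + j) :
    padicValNat 3 (2*(k+j)-1) + padicValNat 3 ((3*(k+j)).choose (k+j)) ≤
    padicValNat 3 ((6*k).choose (3*k)) + padicValNat 3 ((3*k).choose k) +
    padicValNat 3 ((6*j).choose (3*j)) + padicValNat 3 ((3*j).choose j) := by
  haveI : Fact (Nat.Prime 3) := ⟨by norm_num⟩
  have A1 : padicValNat 3 ((6*k).choose (3*k)) + padicValNat 3 ((3*k)!) + padicValNat 3 ((3*k)!)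
      = padicValNat 3 ((6*k)!) := by
    have := padic_choose 3 (show 3*k ≤ 6*k by omega)
    rwa [show 6*k - 3*k = 3*k by omega] at this
  have A2 : padicValNat 3 ((3*k).choose k) + padicValNat 3 (k !) + padicValNat 3 ((2*k)!)
      = padicValNat 3 ((3*k)!) := by
    have := padic_choose 3 (show k ≤ 3*k by omega)
    rwa [show 3*k - k = 2*k by omega] at this
  have A1' : padicValNat 3 ((6*j).choose (3*j)) + padicValNat 3 ((3*j)!) + padicValNat 3 ((3*j)!)
      = padicValNat 3 ((6*j)!) := by
    have := padic_choose 3 (show 3*j ≤ 6*j by omega)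
    rwa [show 6*j - 3*j = 3*j by omega] at this
  have A2' : padicValNat 3 ((3*j).choose j) + padicValNat 3 (j !) + padicValNat 3 ((2*j)!)
      = padicValNat 3 ((3*j)!) := by
    have := padic_choose 3 (show j ≤ 3*j by omega)
    rwa [show 3*j - j = 2*j by omega] at this
  have B1 : padicValNat 3 ((3*(k+j)).choose (k+j)) + padicValNat 3 ((k+j)!)
      + padicValNat 3 ((2*(k+j))!) = padicValNat 3 ((3*(k+j))!) := by
    have := padic_choose 3 (show k+j ≤ 3*(k+j) by omega)
    rwa [show 3*(k+j) - (k+j) = 2*(k+j) by omega] at this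
  have B2 : padicValNat 3 ((2*(k+j)).choose (k+j)) + padicValNat 3 ((k+j)!)
      + padicValNat 3 ((k+j)!) = padicValNat 3 ((2*(k+j))!) := by
    have := padic_choose 3 (show k+j ≤ 2*(k+j) by omega)
    rwa [show 2*(k+j) - (k+j) = k+j by omega] at this
  have B3 : padicValNat 3 ((k+j).choose k) + padicValNat 3 (k !) + padicValNat 3 (j !)
      = padicValNat 3 ((k+j)!) := by
    have := padic_choose 3 (show k ≤ k+j by omega)
    rwa [show k+j - k = j by omega] at this
  have M1 : padicValNat 3 ((6*k)!) = padicValNat 3 ((2*k)!) + 2*k := by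
    have := padicValNat_factorial_mul (p := 3) (2*k)
    rwa [show 3*(2*k) = 6*k by ring] at this
  have M2 : padicValNat 3 ((3*k)!) = padicValNat 3 (k !) + k :=
    padicValNat_factorial_mul (p := 3) k
  have M1' : padicValNat 3 ((6*j)!) = padicValNat 3 ((2*j)!) + 2*j := by
    have := padicValNat_factorial_mul (p := 3) (2*j)
    rwa [show 3*(2*j) = 6*j by ring] at this
  have M2' : padicValNat 3 ((3*j)!) = padicValNat 3 (j !) + j :=
    padicValNat_factorial_mul (p := 3) j
  have M3 : padicValNat 3 ((3*(k+j))!) = padicValNat 3 ((k+j)!) + (k+j) :=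
    padicValNat_factorial_mul (p := 3) (k+j)
  have E6 : padicValNat 3 (2*(k+j)-1) ≤ padicValNat 3 ((2*(k+j)).choose (k+j)) := by
    have hdvd : (2*(k+j)-1) ∣ (2*(k+j)).choose (k+j) := by
      obtain ⟨m, hm⟩ : ∃ m, k + j = m + 1 := ⟨k+j-1, by omega⟩
      rw [hm]
      exact two_sub_one_dvd_centralBinom m
    have hp1 : (3:ℕ)^(padicValNat 3 (2*(k+j)-1)) ∣ (2*(k+j)-1) := pow_padicValNat_dvd
    have hp2 := hp1.trans hdvd
    exact (padicValNat_dvd_iff_le (Nat.choose_pos (show k+j ≤ 2*(k+j) by omega)).ne').mp hp2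
  omega

lemma key_other (p : ℕ) (hp : p.Prime) (hp3 : p ≠ 3) (k j : ℕ) (hn : 1 ≤ k + j) :
    padicValNat p (2*(k+j)-1) + padicValNat p ((3*(k+j)).choose (k+j)) ≤
    padicValNat p ((6*k).choose (3*k)) + padicValNat p ((3*k).choose k) +
    padicValNat p ((6*j).choose (3*j)) + padicValNat p ((3*j).choose j) := by
  haveI : Fact p.Prime := ⟨hp⟩
  set B := 6*(k+j)+1 with hB
  -- Legendre expansions
  have hlog : ∀ m : ℕ, m ≤ 6*(k+j) → Nat.log p m < B := fun m hm =>
    lt_of_le_of_lt (le_trans (Nat.log_le_self p m) hm) (by omega)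
  have L6k : padicValNat p ((6*k)!) = ∑ i ∈ Ico 1 B, 6*k/p^i :=
    padicValNat_factorial (hlog _ (by omega))
  have L3k : padicValNat p ((3*k)!) = ∑ i ∈ Ico 1 B, 3*k/p^i :=
    padicValNat_factorial (hlog _ (by omega))
  have L2k : padicValNat p ((2*k)!) = ∑ i ∈ Ico 1 B, 2*k/p^i :=
    padicValNat_factorial (hlog _ (by omega))
  have Lk : padicValNat p (k !) = ∑ i ∈ Ico 1 B, k/p^i :=
    padicValNat_factorial (hlog _ (by omega))
  have L6j : padicValNat p ((6*j)!) = ∑ i ∈ Ico 1 B, 6*j/p^i :=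
    padicValNat_factorial (hlog _ (by omega))
  have L3j : padicValNat p ((3*j)!) = ∑ i ∈ Ico 1 B, 3*j/p^i :=
    padicValNat_factorial (hlog _ (by omega))
  have L2j : padicValNat p ((2*j)!) = ∑ i ∈ Ico 1 B, 2*j/p^i :=
    padicValNat_factorial (hlog _ (by omega))
  have Lj : padicValNat p (j !) = ∑ i ∈ Ico 1 B, j/p^i :=
    padicValNat_factorial (hlog _ (by omega))
  have L3n : padicValNat p ((3*(k+j))!) = ∑ i ∈ Ico 1 B, 3*(k+j)/p^i :=
    padicValNat_factorial (hlog _ (by omega))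
  have L2n : padicValNat p ((2*(k+j))!) = ∑ i ∈ Ico 1 B, 2*(k+j)/p^i :=
    padicValNat_factorial (hlog _ (by omega))
  have Ln : padicValNat p ((k+j)!) = ∑ i ∈ Ico 1 B, (k+j)/p^i :=
    padicValNat_factorial (hlog _ (by omega))
  -- valuation of 2n-1 as a sum of indicators
  have hM0 : 2*(k+j)-1 ≠ 0 := by omega
  have aa : padicValNat p (2*(k+j)-1)
      = ∑ i ∈ Ico 1 B, (if p^i ∣ (2*(k+j)-1) then 1 else 0) := by
    rw [Finset.sum_boole]
    have hfil : (Ico 1 B).filter (fun i => p^i ∣ (2*(k+j)-1))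
        = Ico 1 (padicValNat p (2*(k+j)-1) + 1) := by
      have hub : padicValNat p (2*(k+j)-1) + 1 ≤ B := by
        have h1 : padicValNat p (2*(k+j)-1) ≤ Nat.log p (2*(k+j)-1) :=
          padicValNat_le_nat_log _
        have h2 : Nat.log p (2*(k+j)-1) ≤ 2*(k+j)-1 := Nat.log_le_self _ _
        omega
      ext i
      simp only [Finset.mem_filter, Finset.mem_Ico, padicValNat_dvd_iff_le hM0]
      omega
    rw [hfil, Nat.card_Ico, Nat.cast_id]
    omega
  -- per-level inequality summed
  have master : (∑ i ∈ Ico 1 B, ((if p^i ∣ (2*(k+j)-1) then 1 else 0)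
        + 3*(k+j)/p^i + (3*k/p^i + 2*k/p^i + k/p^i) + (3*j/p^i + 2*j/p^i + j/p^i)))
      ≤ ∑ i ∈ Ico 1 B, (6*k/p^i + 6*j/p^i + (2*(k+j)/p^i + (k+j)/p^i)) := by
    apply Finset.sum_le_sum
    intro i hi
    have hi1 : 1 ≤ i := (Finset.mem_Ico.mp hi).1
    have hq : 2 ≤ p^i := by
      have h1 : p ≤ p^i := Nat.le_self_pow (by omega) p
      have := hp.two_le
      omega
    apply level (p^i) k j _ hq
    by_cases hdv : p^i ∣ (2*(k+j)-1)
    · refine Or.inr ⟨if_pos hdv, ?_, hdv, hn⟩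
      intro hcon
      have h3p : (3:ℕ) ∣ p := Nat.Prime.dvd_of_dvd_pow (by norm_num) hcon
      exact hp3 ((Nat.prime_dvd_prime_iff_eq (by norm_num) hp).mp h3p).symm
    · exact Or.inl (if_neg hdv)
  simp only [Finset.sum_add_distrib] at master
  rw [← aa, ← L3n, ← L3k, ← L2k, ← Lk, ← L3j, ← L2j, ← Lj, ← L6k, ← L6j, ← L2n, ← Ln] at master
  -- choose equations
  have A1 : padicValNat p ((6*k).choose (3*k)) + padicValNat p ((3*k)!) + padicValNat p ((3*k)!)
      = padicValNat p ((6*k)!) := by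
    have := padic_choose p (show 3*k ≤ 6*k by omega)
    rwa [show 6*k - 3*k = 3*k by omega] at this
  have A2 : padicValNat p ((3*k).choose k) + padicValNat p (k !) + padicValNat p ((2*k)!)
      = padicValNat p ((3*k)!) := by
    have := padic_choose p (show k ≤ 3*k by omega)
    rwa [show 3*k - k = 2*k by omega] at this
  have A1' : padicValNat p ((6*j).choose (3*j)) + padicValNat p ((3*j)!) + padicValNat p ((3*j)!)
      = padicValNat p ((6*j)!) := by
    have := padic_choose p (show 3*j ≤ 6*j by omega)
    rwa [show 6*j - 3*j = 3*j by omega] at this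
  have A2' : padicValNat p ((3*j).choose j) + padicValNat p (j !) + padicValNat p ((2*j)!)
      = padicValNat p ((3*j)!) := by
    have := padic_choose p (show j ≤ 3*j by omega)
    rwa [show 3*j - j = 2*j by omega] at this
  have B1 : padicValNat p ((3*(k+j)).choose (k+j)) + padicValNat p ((k+j)!)
      + padicValNat p ((2*(k+j))!) = padicValNat p ((3*(k+j))!) := by
    have := padic_choose p (show k+j ≤ 3*(k+j) by omega)
    rwa [show 3*(k+j) - (k+j) = 2*(k+j) by omega] at this
  omega

lemma nat_dvd_main (k j : ℕ) (hn : 1 ≤ k + j) :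
    (2*(k+j)-1) * ((3*(k+j)).choose (k+j)) ∣
    ((6*k).choose (3*k)) * ((3*k).choose k) * ((6*j).choose (3*j)) * ((3*j).choose j) := by
  have c1 : ((6*k).choose (3*k)) ≠ 0 := (Nat.choose_pos (by omega)).ne'
  have c2 : ((3*k).choose k) ≠ 0 := (Nat.choose_pos (by omega)).ne'
  have c3 : ((6*j).choose (3*j)) ≠ 0 := (Nat.choose_pos (by omega)).ne'
  have c4 : ((3*j).choose j) ≠ 0 := (Nat.choose_pos (by omega)).ne'
  have cN : ((3*(k+j)).choose (k+j)) ≠ 0 := (Nat.choose_pos (by omega)).ne'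
  have hd0 : (2*(k+j)-1) * ((3*(k+j)).choose (k+j)) ≠ 0 :=
    mul_ne_zero (by omega) cN
  have hm0 : ((6*k).choose (3*k)) * ((3*k).choose k) * ((6*j).choose (3*j)) * ((3*j).choose j) ≠ 0 :=
    mul_ne_zero (mul_ne_zero (mul_ne_zero c1 c2) c3) c4
  rw [← Nat.factorization_le_iff_dvd hd0 hm0, Finsupp.le_def]
  intro p
  by_cases hp : p.Prime
  · rw [Nat.factorization_mul (by omega : 2*(k+j)-1 ≠ 0) cN,
        Nat.factorization_mul (mul_ne_zero (mul_ne_zero c1 c2) c3) c4,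
        Nat.factorization_mul (mul_ne_zero c1 c2) c3,
        Nat.factorization_mul c1 c2]
    simp only [Finsupp.coe_add, Pi.add_apply]
    rw [Nat.factorization_def _ hp, Nat.factorization_def _ hp, Nat.factorization_def _ hp,
        Nat.factorization_def _ hp, Nat.factorization_def _ hp, Nat.factorization_def _ hp]
    by_cases hp3 : p = 3
    · subst hp3
      exact key_three k j hn
    · exact key_other p hp hp3 k j hn
  · rw [Nat.factorization_eq_zero_of_not_prime _ hp]
    exact Nat.zero_le _

theorem summand_divisibility (n k : ℕ) (hk : k ≤ n) :
    ((2 * (n : ℤ) - 1) * (Nat.choose (3 * n) n : ℤ)) ∣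
      ((Nat.choose (6 * k) (3 * k) : ℤ) * (Nat.choose (3 * k) k : ℤ) *
        (Nat.choose (6 * (n - k)) (3 * (n - k)) : ℤ) *
        (Nat.choose (3 * (n - k)) (n - k) : ℤ)) := by
  rcases Nat.eq_zero_or_pos n with rfl | hn
  · have hk0 : k = 0 := by omega
    subst hk0
    norm_num
  · set j := n - k with hj
    have hnkj : n = k + j := by omega
    have h := nat_dvd_main k j (by omega)
    have h2 := Int.natCast_dvd_natCast.mpr h
    have e1 : ((2*(k+j)-1 : ℕ) : ℤ) = 2*(n:ℤ) - 1 := by omega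
    rw [Nat.cast_mul, Nat.cast_mul, Nat.cast_mul, Nat.cast_mul, e1, ← hnkj] at h2
    exact h2
end

section
/- For all integers n ≥ 2 and 0 ≤ k < n/2, there holds C(6k,3k)·C(3k,k)·C(6(n-k),3(n-k))·C(3(n-k),n-k) ≥ C(6k+6,3k+3)·C(3k+3,k+1)·C(6(n-k-1),3(n-k-1))·C(3(n-k-1),n-k-1). -/
open Nat

lemma fact_exp6 (m : ℕ) : (6*m+6).factorial =
    (6*m+1)*(6*m+2)*(6*m+3)*(6*m+4)*(6*m+5)*(6*m+6) * (6*m).factorial := by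
  rw [show 6*m+6 = 6*m+5+1 from by omega, Nat.factorial_succ,
      show 6*m+5 = 6*m+4+1 from by omega, Nat.factorial_succ,
      show 6*m+4 = 6*m+3+1 from by omega, Nat.factorial_succ,
      show 6*m+3 = 6*m+2+1 from by omega, Nat.factorial_succ,
      show 6*m+2 = 6*m+1+1 from by omega, Nat.factorial_succ,
      Nat.factorial_succ]
  ring

lemma fact_exp3 (m : ℕ) : (3*m+3).factorial =
    (3*m+1)*(3*m+2)*(3*m+3) * (3*m).factorial := by
  rw [show 3*m+3 = 3*m+2+1 from by omega, Nat.factorial_succ,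
      show 3*m+2 = 3*m+1+1 from by omega, Nat.factorial_succ,
      Nat.factorial_succ]
  ring

lemma fact_exp2 (m : ℕ) : (2*m+2).factorial =
    (2*m+1)*(2*m+2) * (2*m).factorial := by
  rw [show 2*m+2 = 2*m+1+1 from by omega, Nat.factorial_succ, Nat.factorial_succ]
  ring

lemma key (m : ℕ) :
    Nat.choose (6*m+6) (3*m+3) * Nat.choose (3*m+3) (m+1) * ((m+1)^2) =
    Nat.choose (6*m) (3*m) * Nat.choose (3*m) m * (12*(6*m+1)*(6*m+5)) := by
  have h1 : (3*m+3 : ℕ) ≤ 6*m+6 := by omega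
  have h2 : (m+1 : ℕ) ≤ 3*m+3 := by omega
  have h3 : (3*m : ℕ) ≤ 6*m := by omega
  have h4 : m ≤ 3*m := by omega
  rw [← Nat.cast_inj (R := ℚ)]
  push_cast
  rw [Nat.cast_choose ℚ h1, Nat.cast_choose ℚ h2, Nat.cast_choose ℚ h3,
      Nat.cast_choose ℚ h4,
      show 6*m+6-(3*m+3) = 3*m+3 from by omega,
      show 3*m+3-(m+1) = 2*m+2 from by omega,
      show 6*m-3*m = 3*m from by omega,
      show 3*m-m = 2*m from by omega,
      fact_exp6, fact_exp3]
  rw [show (m+1 : ℕ).factorial = (m+1) * m.factorial from Nat.factorial_succ m,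
      fact_exp2]
  push_cast
  have n1 : ((6*m).factorial : ℚ) ≠ 0 := by positivity
  have n2 : ((3*m).factorial : ℚ) ≠ 0 := by positivity
  have n3 : ((2*m).factorial : ℚ) ≠ 0 := by positivity
  have n4 : (m.factorial : ℚ) ≠ 0 := by positivity
  field_simp
  ring

theorem summand_monotone (n k : ℕ) (hn : 2 ≤ n) (hk : 2 * k < n) :
    Nat.choose (6 * k + 6) (3 * k + 3) * Nat.choose (3 * k + 3) (k + 1) *
      Nat.choose (6 * (n - k - 1)) (3 * (n - k - 1)) *
      Nat.choose (3 * (n - k - 1)) (n - k - 1) ≤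
    Nat.choose (6 * k) (3 * k) * Nat.choose (3 * k) k *
      Nat.choose (6 * (n - k)) (3 * (n - k)) *
      Nat.choose (3 * (n - k)) (n - k) := by
  obtain ⟨j, hj⟩ : ∃ j, n - k = j + 1 := ⟨n - k - 1, by omega⟩
  have hkj : k ≤ j := by omega
  rw [hj]
  simp only [Nat.add_sub_cancel]
  rw [show 6*(j+1) = 6*j+6 from by ring, show 3*(j+1) = 3*j+3 from by ring]
  refine Nat.le_of_mul_le_mul_right ?_ (show 0 < (k+1)^2*(j+1)^2 by positivity)
  obtain ⟨d, rfl⟩ : ∃ d, j = k + d := ⟨j - k, by omega⟩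
  have hscal : 12*(6*k+1)*(6*k+5)*((k+d+1)^2) ≤ (k+1)^2*(12*(6*(k+d)+1)*(6*(k+d)+5)) := by
    have e : (k+1)^2*(12*(6*(k+d)+1)*(6*(k+d)+5)) =
        12*(6*k+1)*(6*k+5)*((k+d+1)^2) +
        12*(36*k^2*d+36*k*d^2+62*k*d+31*d^2+26*d) := by ring
    rw [e]
    exact Nat.le_add_right _ _
  set j := k + d with hjdef
  set Fk := Nat.choose (6*k) (3*k) * Nat.choose (3*k) k with hFk
  set Fj := Nat.choose (6*j) (3*j) * Nat.choose (3*j) j with hFj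
  calc Nat.choose (6*k+6) (3*k+3) * Nat.choose (3*k+3) (k+1) *
        Nat.choose (6*j) (3*j) * Nat.choose (3*j) j * ((k+1)^2*(j+1)^2)
      = (Nat.choose (6*k+6) (3*k+3) * Nat.choose (3*k+3) (k+1) * ((k+1)^2)) *
        (Fj * (j+1)^2) := by rw [hFj]; ring
    _ = (Fk * (12*(6*k+1)*(6*k+5))) * (Fj * (j+1)^2) := by rw [key k, hFk]
    _ = (Fk * Fj) * (12*(6*k+1)*(6*k+5) * ((j+1)^2)) := by ring
    _ ≤ (Fk * Fj) * ((k+1)^2 * (12*(6*j+1)*(6*j+5))) := by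
        exact Nat.mul_le_mul_left _ hscal
    _ = (Fk * (k+1)^2) * (Nat.choose (6*j) (3*j) * Nat.choose (3*j) j *
          (12*(6*j+1)*(6*j+5))) := by rw [hFj]; ring
    _ = (Fk * (k+1)^2) * (Nat.choose (6*j+6) (3*j+3) * Nat.choose (3*j+3) (j+1) *
          ((j+1)^2)) := by rw [key j]
    _ = Fk * Nat.choose (6*j+6) (3*j+3) * Nat.choose (3*j+3) (j+1) *
          ((k+1)^2*(j+1)^2) := by ring
end

section
/- Let m, n ≥ 1 be integers and 0 ≤ k ≤ n. Then C(mn, n) divides C(2mk, mk)·C(mk, k)·C(2m(n-k), m(n-k))·C(m(n-k), n-k). -/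
open Nat in
private lemma supercat : ∀ a b : ℕ, (a ! * b ! * (a + b)!) ∣ ((2 * a)! * (2 * b)!) := by
  intro a
  induction a with
  | zero =>
    intro b
    refine ⟨(2 * b).choose b, ?_⟩
    have h := Nat.choose_mul_factorial_mul_factorial (show b ≤ 2 * b by omega)
    have h2 : 2 * b - b = b := by omega
    rw [h2] at h
    simp [Nat.factorial]
    rw [← h]
    ring
  | succ a ih =>
    intro b
    obtain ⟨c1, h1⟩ := ih b
    obtain ⟨c2, h2⟩ := ih (b + 1)
    -- factorial expansions
    have f1 : (2 * (a + 1))! = (2 * a + 1 + 1) * ((2 * a + 1) * (2 * a)!) := by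
      rw [show 2 * (a + 1) = 2 * a + 1 + 1 by ring, Nat.factorial_succ, Nat.factorial_succ]
    have f2 : (a + 1)! = (a + 1) * a ! := Nat.factorial_succ a
    have f3 : (a + 1 + b)! = (a + b + 1) * (a + b)! := by
      rw [show a + 1 + b = (a + b) + 1 by ring, Nat.factorial_succ]
    have f4 : (2 * (b + 1))! = (2 * b + 1 + 1) * ((2 * b + 1) * (2 * b)!) := by
      rw [show 2 * (b + 1) = 2 * b + 1 + 1 by ring, Nat.factorial_succ, Nat.factorial_succ]
    have f5 : (b + 1)! = (b + 1) * b ! := Nat.factorial_succ b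
    have f6 : (a + (b + 1))! = (a + b + 1) * (a + b)! := by
      rw [show a + (b + 1) = (a + b) + 1 by ring, Nat.factorial_succ]
    rw [f4, f5, f6] at h2
    -- move to ℤ
    have e1 : ((2 * a)! * (2 * b)! : ℤ) = (a ! : ℤ) * (b ! : ℤ) * ((a + b)! : ℤ) * c1 := by
      exact_mod_cast h1
    have e2 : ((2 * a)! : ℤ) * ((2 * b + 1 + 1) * ((2 * b + 1) * ((2 * b)! : ℤ)))
        = (a ! : ℤ) * ((b + 1) * (b ! : ℤ)) * ((a + b + 1) * ((a + b)! : ℤ)) * c2 := by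
      exact_mod_cast h2
    have hb : ((b : ℤ) + 1) ≠ 0 := by positivity
    have key : ((2 * (a + 1))! * (2 * b)! : ℤ)
        = ((a + 1)! * b ! * ((a + 1) + b)! : ℤ) * (4 * c1 - c2) := by
      apply mul_left_cancel₀ hb
      push_cast [f1, f2, f3]
      linear_combination (4 * ((a : ℤ) + 1) * ((a : ℤ) + (b : ℤ) + 1) * ((b : ℤ) + 1)) * e1
        - ((a : ℤ) + 1) * e2
    have : (((a + 1)! * b ! * ((a + 1) + b)! : ℕ) : ℤ) ∣ (((2 * (a + 1))! * (2 * b)! : ℕ) : ℤ) := by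
      refine ⟨4 * c1 - c2, ?_⟩
      push_cast
      push_cast at key
      linarith [key]
    exact_mod_cast this

open Nat in
private lemma choose2 (a b : ℕ) : ∃ c : ℕ, (2 * a).choose a * (2 * b).choose b = (a + b).choose a * c := by
  obtain ⟨c, hc⟩ := supercat a b
  refine ⟨c, ?_⟩
  have h1 := Nat.choose_mul_factorial_mul_factorial (show a ≤ 2 * a by omega)
  have h2 := Nat.choose_mul_factorial_mul_factorial (show b ≤ 2 * b by omega)
  have h3 := Nat.choose_mul_factorial_mul_factorial (show a ≤ a + b by omega)
  rw [show 2 * a - a = a by omega] at h1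
  rw [show 2 * b - b = b by omega] at h2
  rw [show a + b - a = b by omega] at h3
  have hpos : ((a ! : ℤ) * a ! * b ! * b !) ≠ 0 := by positivity
  have e1 : ((2 * a).choose a : ℤ) * a ! * a ! = (2 * a)! := by exact_mod_cast h1
  have e2 : ((2 * b).choose b : ℤ) * b ! * b ! = (2 * b)! := by exact_mod_cast h2
  have e3 : ((a + b).choose a : ℤ) * a ! * b ! = (a + b)! := by exact_mod_cast h3
  have ec : ((2 * a)! * (2 * b)! : ℤ) = (a ! : ℤ) * b ! * (a + b)! * c := by exact_mod_cast hc
  have key : ((2 * a).choose a : ℤ) * (2 * b).choose b = ((a + b).choose a : ℤ) * c := by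
    apply mul_left_cancel₀ hpos
    linear_combination (((2 * b).choose b : ℤ) * b ! * b !) * e1 + ((2 * a)! : ℤ) * e2
      + ec - ((a ! : ℤ) * b ! * c) * e3
  exact_mod_cast key

theorem choose_mn_dvd (m n k : ℕ) (hm : 1 ≤ m) (hn : 1 ≤ n) (hk : k ≤ n) :
    Nat.choose (m * n) n ∣
      Nat.choose (2 * m * k) (m * k) * Nat.choose (m * k) k *
        Nat.choose (2 * m * (n - k)) (m * (n - k)) *
        Nat.choose (m * (n - k)) (n - k) := by
  set N := m * n with hN
  set a := m * k with ha
  set b := m * (n - k) with hb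
  have hab : a + b = N := by
    rw [ha, hb, hN, ← Nat.mul_add, Nat.add_sub_cancel' hk]
  have hka : k ≤ a := Nat.le_mul_of_pos_left k hm
  have hnkb : n - k ≤ b := Nat.le_mul_of_pos_left (n - k) hm
  have haN : a ≤ N := by omega
  have hnN : n ≤ N := Nat.le_mul_of_pos_left n hm
  -- chain identity: C(N,a)*C(a,k)*C(b,n-k) = C(N,n)*C(n,k)*C(N-n, b-(n-k))
  have h1 := Nat.choose_mul (n := N) hka
  have h2 := Nat.choose_mul (n := N) hk
  have h3 : (N - k).choose (a - k) = (N - k).choose b := by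
    rw [← Nat.choose_symm (show a - k ≤ N - k by omega)]
    congr 1
    omega
  have h4 := Nat.choose_mul (n := N - k) hnkb
  rw [show N - k - (n - k) = N - n by omega] at h4
  have key : N.choose a * (a.choose k * b.choose (n - k))
      = N.choose n * (n.choose k * ((N - n).choose (b - (n - k)))) := by
    have e1 : (N.choose a : ℤ) * a.choose k = (N.choose k : ℤ) * (N - k).choose (a - k) := by
      exact_mod_cast h1
    have e2 : (N.choose n : ℤ) * n.choose k = (N.choose k : ℤ) * (N - k).choose (n - k) := by
      exact_mod_cast h2
    have e3 : ((N - k).choose (a - k) : ℤ) = (N - k).choose b := by exact_mod_cast h3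
    have e4 : ((N - k).choose b : ℤ) * b.choose (n - k)
        = ((N - k).choose (n - k) : ℤ) * (N - n).choose (b - (n - k)) := by exact_mod_cast h4
    have : (N.choose a : ℤ) * (a.choose k * b.choose (n - k))
        = (N.choose n : ℤ) * (n.choose k * ((N - n).choose (b - (n - k)))) := by
      linear_combination ((b.choose (n - k) : ℤ)) * e1
        + ((b.choose (n - k) : ℤ) * (N.choose k : ℤ)) * e3
        + ((N.choose k : ℤ)) * e4
        - (((N - n).choose (b - (n - k)) : ℤ)) * e2
    exact_mod_cast this
  have dvd1 : N.choose n ∣ N.choose a * (a.choose k * b.choose (n - k)) :=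
    ⟨_, key⟩
  obtain ⟨c, hc⟩ := choose2 a b
  rw [hab] at hc
  have rw1 : 2 * m * k = 2 * a := by rw [ha]; ring
  have rw2 : 2 * m * (n - k) = 2 * b := by rw [hb]; ring
  rw [rw1, rw2]
  have : (2 * a).choose a * a.choose k * (2 * b).choose b * b.choose (n - k)
      = (N.choose a * (a.choose k * b.choose (n - k))) * c := by
    calc (2 * a).choose a * a.choose k * (2 * b).choose b * b.choose (n - k)
        = ((2 * a).choose a * (2 * b).choose b) * (a.choose k * b.choose (n - k)) := by ring
      _ = (N.choose a * c) * (a.choose k * b.choose (n - k)) := by rw [hc]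
      _ = (N.choose a * (a.choose k * b.choose (n - k))) * c := by ring
  rw [this]
  exact dvd1.mul_right c
end

section
/- For all integers 0 ≤ k ≤ n with n ≥ 1, the integer (2n-1) divides the super-Catalan-type quotient (6k)!·(6n-6k)!·(2n)! / ((3k)!·(3n-3k)!·(3n)!·(2k)!·(2n-2k)!); here this quotient is itself an integer. -/
open Nat Finset

private lemma div_twice (q x : ℕ) (hq : 0 < q) :
    (2 * x) / q = 2 * (x / q) + (2 * (x % q)) / q := by
  have e := Nat.div_add_mod x q
  have h : 2 * x = 2 * (x % q) + q * (2 * (x / q)) := by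
    calc 2 * x = 2 * (q * (x / q) + x % q) := by rw [e]
    _ = 2 * (x % q) + q * (2 * (x / q)) := by ring
  rw [h, Nat.add_mul_div_left _ _ hq]
  exact Nat.add_comm _ _

private lemma div_split_add (q x y : ℕ) (hq : 0 < q) :
    (x + y) / q = x / q + y / q + (x % q + y % q) / q := by
  have ex := Nat.div_add_mod x q
  have ey := Nat.div_add_mod y q
  have h : x + y = (x % q + y % q) + q * (x / q + y / q) := by
    calc x + y = (q * (x / q) + x % q) + (q * (y / q) + y % q) := by rw [ex, ey]
    _ = (x % q + y % q) + q * (x / q + y / q) := by ring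
  rw [h, Nat.add_mul_div_left _ _ hq]
  exact Nat.add_comm _ _

private lemma key_ineq (q A B : ℕ) (hq : 0 < q) (hA : A < q) (hB : B < q) :
    (A + B) / q ≤ (2 * A) / q + (2 * B) / q := by
  rcases Nat.lt_or_ge (A + B) q with h | h
  · rw [Nat.div_eq_of_lt h]; exact Nat.zero_le _
  · have h1 : (A + B) / q = 1 := Nat.div_eq_of_lt_le (by omega) (by omega)
    rw [h1]
    rcases le_total A B with hab | hab
    · calc 1 ≤ (2 * B) / q := (Nat.one_le_div_iff hq).2 (by omega)
      _ ≤ (2 * A) / q + (2 * B) / q := Nat.le_add_left _ _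
    · calc 1 ≤ (2 * A) / q := (Nat.one_le_div_iff hq).2 (by omega)
      _ ≤ (2 * A) / q + (2 * B) / q := Nat.le_add_right _ _

/-- Integrality: the level-`q` floor inequality. -/
private lemma L0 (q k m : ℕ) :
    3 * k / q + 3 * m / q + 3 * (k + m) / q + 2 * k / q + 2 * m / q ≤
      6 * k / q + 6 * m / q + 2 * (k + m) / q := by
  rcases Nat.eq_zero_or_pos q with rfl | hq
  · simp
  have h1 := key_ineq q (3 * k % q) (3 * m % q) hq (Nat.mod_lt _ hq) (Nat.mod_lt _ hq)
  rw [show 3 * (k + m) = 3 * k + 3 * m by ring, div_split_add q (3 * k) (3 * m) hq,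
      show (2 : ℕ) * (k + m) = 2 * k + 2 * m by ring, div_split_add q (2 * k) (2 * m) hq,
      show (6 : ℕ) * k = 2 * (3 * k) by ring, div_twice q (3 * k) hq,
      show (6 : ℕ) * m = 2 * (3 * m) by ring, div_twice q (3 * m) hq]
  set a1 := 3 * k / q
  set a2 := 3 * m / q
  set a3 := (3 * k % q + 3 * m % q) / q
  set a4 := (2 * (3 * k % q)) / q
  set a5 := (2 * (3 * m % q)) / q
  set a6 := 2 * k / q
  set a7 := 2 * m / q
  set a8 := (2 * k % q + 2 * m % q) / q
  clear_value a1 a2 a3 a4 a5 a6 a7 a8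
  omega

private lemma div01 (q X : ℕ) (hq : 0 < q) (hX : X < 2 * q) :
    (X < q ∧ X / q = 0) ∨ (q ≤ X ∧ X / q = 1) := by
  rcases Nat.lt_or_ge X q with h | h
  · exact Or.inl ⟨h, Nat.div_eq_of_lt h⟩
  · exact Or.inr ⟨h, Nat.div_eq_of_lt_le (by omega) (by omega)⟩

/-- The extra unit at levels dividing `2n - 1`, for odd `q ≥ 5`. -/
private lemma L1 (q k m : ℕ) (hq5 : 5 ≤ q) (hq2 : q % 2 = 1) (hn : 1 ≤ k + m)
    (hdvd : q ∣ 2 * (k + m) - 1) :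
    3 * k / q + 3 * m / q + 3 * (k + m) / q + 2 * k / q + 2 * m / q + 1 ≤
      6 * k / q + 6 * m / q + 2 * (k + m) / q := by
  have hq0 : 0 < q := by omega
  obtain ⟨t, ht⟩ := hdvd
  have h2n : 2 * (k + m) = q * t + 1 := by rw [← ht]; omega
  have hA : 3 * k % q < q := Nat.mod_lt _ hq0
  have hB : 3 * m % q < q := Nat.mod_lt _ hq0
  have ha : 2 * k % q < q := Nat.mod_lt _ hq0
  have hb : 2 * m % q < q := Nat.mod_lt _ hq0
  have h2nmod : (2 * (k + m)) % q = 1 := by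
    rw [h2n, Nat.mul_add_mod, Nat.mod_eq_of_lt (by omega)]
  have habm : (2 * k % q + 2 * m % q) % q = 1 := by
    rw [← Nat.add_mod, show (2 : ℕ) * k + 2 * m = 2 * (k + m) by ring, h2nmod]
  have hab : 2 * k % q + 2 * m % q = 1 ∨ 2 * k % q + 2 * m % q = q + 1 := by
    have hd := Nat.div_add_mod (2 * k % q + 2 * m % q) q
    rw [habm] at hd
    have hlt : (2 * k % q + 2 * m % q) / q < 2 := (Nat.div_lt_iff_lt_mul hq0).2 (by omega)
    have h01 : (2 * k % q + 2 * m % q) / q = 0 ∨ (2 * k % q + 2 * m % q) / q = 1 :=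
      Nat.le_one_iff_eq_zero_or_eq_one.mp (Nat.lt_succ_iff.mp hlt)
    rcases h01 with h | h <;> rw [h] at hd <;> omega
  have h6nmod : (6 * (k + m)) % q = 3 := by
    have h6 : 6 * (k + m) = q * (3 * t) + 3 := by
      calc 6 * (k + m) = 3 * (2 * (k + m)) := by ring
      _ = 3 * (q * t + 1) := by rw [h2n]
      _ = q * (3 * t) + 3 := by ring
    rw [h6, Nat.mul_add_mod, Nat.mod_eq_of_lt (by omega)]
  have hC2 : (2 * (3 * (k + m) % q)) % q = 3 := by
    rw [Nat.mul_mod_mod, show (2 : ℕ) * (3 * (k + m)) = 6 * (k + m) by ring, h6nmod]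
  have hC0lt : 3 * (k + m) % q < q := Nat.mod_lt _ hq0
  have hC : 2 * (3 * (k + m) % q) = q + 3 := by
    have hd := Nat.div_add_mod (2 * (3 * (k + m) % q)) q
    rw [hC2] at hd
    have hlt : (2 * (3 * (k + m) % q)) / q < 2 := (Nat.div_lt_iff_lt_mul hq0).2 (by omega)
    have h01 : (2 * (3 * (k + m) % q)) / q = 0 ∨ (2 * (3 * (k + m) % q)) / q = 1 :=
      Nat.le_one_iff_eq_zero_or_eq_one.mp (Nat.lt_succ_iff.mp hlt)
    rcases h01 with h | h <;> rw [h] at hd <;> omega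
  have hABm : (3 * k % q + 3 * m % q) % q = 3 * (k + m) % q := by
    rw [← Nat.add_mod, show (3 : ℕ) * k + 3 * m = 3 * (k + m) by ring]
  have hAB : 3 * k % q + 3 * m % q = 3 * (k + m) % q ∨
      3 * k % q + 3 * m % q = 3 * (k + m) % q + q := by
    have hd := Nat.div_add_mod (3 * k % q + 3 * m % q) q
    rw [hABm] at hd
    have hlt : (3 * k % q + 3 * m % q) / q < 2 := (Nat.div_lt_iff_lt_mul hq0).2 (by omega)
    have h01 : (3 * k % q + 3 * m % q) / q = 0 ∨ (3 * k % q + 3 * m % q) / q = 1 :=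
      Nat.le_one_iff_eq_zero_or_eq_one.mp (Nat.lt_succ_iff.mp hlt)
    rcases h01 with h | h <;> rw [h] at hd <;> omega
  have hcop : q.Coprime 2 := Nat.coprime_two_right.2 (Nat.odd_iff.2 hq2)
  have hal : ¬ 2 * k % q = 0 ∨ 3 * k % q = 0 := by
    by_cases h0 : 2 * k % q = 0
    · refine Or.inr (Nat.mod_eq_zero_of_dvd ?_)
      exact Dvd.dvd.mul_left (hcop.dvd_of_dvd_mul_left (Nat.dvd_of_mod_eq_zero h0)) 3
    · exact Or.inl h0
  have hbl : ¬ 2 * m % q = 0 ∨ 3 * m % q = 0 := by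
    by_cases h0 : 2 * m % q = 0
    · refine Or.inr (Nat.mod_eq_zero_of_dvd ?_)
      exact Dvd.dvd.mul_left (hcop.dvd_of_dvd_mul_left (Nat.dvd_of_mod_eq_zero h0)) 3
    · exact Or.inl h0
  have hu1 := div01 q (3 * k % q + 3 * m % q) hq0 (by omega)
  have hu2 := div01 q (2 * (3 * k % q)) hq0 (by omega)
  have hu3 := div01 q (2 * (3 * m % q)) hq0 (by omega)
  have hu4 := div01 q (2 * k % q + 2 * m % q) hq0 (by omega)
  rw [show 3 * (k + m) = 3 * k + 3 * m by ring, div_split_add q (3 * k) (3 * m) hq0,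
      show (2 : ℕ) * (k + m) = 2 * k + 2 * m by ring, div_split_add q (2 * k) (2 * m) hq0,
      show (6 : ℕ) * k = 2 * (3 * k) by ring, div_twice q (3 * k) hq0,
      show (6 : ℕ) * m = 2 * (3 * m) by ring, div_twice q (3 * m) hq0]
  -- note: hC involves 3 * (k + m) % q which is unaffected by the goal rewrite
  set A := 3 * k % q
  set B := 3 * m % q
  set a := 2 * k % q
  set b := 2 * m % q
  set C0 := 3 * (k + m) % q
  set K := 3 * k / q
  set M := 3 * m / q
  set x := 2 * k / q
  set y := 2 * m / q
  set u1 := (A + B) / q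
  set u2 := (2 * A) / q
  set u3 := (2 * B) / q
  set u4 := (a + b) / q
  clear_value A B a b C0 K M x y u1 u2 u3 u4
  clear habm hC2 hABm h2nmod h6nmod h2n ht
  omega

private lemma M_lemma (k m : ℕ) (hn : 1 ≤ k + m) :
    (2 * (k + m) - 1) * (k ! * m ! * (k + m)!) ∣ (2 * (k + m))! := by
  set n := k + m with hndef
  have h1 : k ! * m ! ∣ n ! := Nat.factorial_mul_factorial_dvd_factorial_add k m
  have h3 := Nat.succ_mul_centralBinom_succ (n - 1)
  rw [show n - 1 + 1 = n by omega, show 2 * (n - 1) + 1 = 2 * n - 1 by omega] at h3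
  have h2 : (2 * n - 1) ∣ n.centralBinom := by
    have hdvd : (2 * n - 1) ∣ n * n.centralBinom := ⟨2 * (n - 1).centralBinom, by rw [h3]; ring⟩
    have hco : (2 * n - 1).Coprime n := by
      rw [show 2 * n - 1 = (n - 1) + n by omega, Nat.coprime_add_self_left]
      exact (Nat.coprime_self_sub_left (by omega)).2 (Nat.coprime_one_left n)
    exact hco.dvd_of_dvd_mul_left hdvd
  have h4 : n.centralBinom * (n ! * n !) = (2 * n)! := by
    have h5 := Nat.choose_mul_factorial_mul_factorial (show n ≤ 2 * n by omega)
    rw [show 2 * n - n = n by omega] at h5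
    rw [Nat.centralBinom, ← h5]; ring
  have h6 : (2 * n - 1) * (k ! * m ! * n !) ∣ n.centralBinom * (n ! * n !) := by
    obtain ⟨c, hc⟩ := h2
    obtain ⟨d, hd⟩ := h1
    exact ⟨c * d, by rw [hc, hd]; ring⟩
  rw [h4] at h6
  exact h6

private lemma fact_mul_apply {a b : ℕ} (ha : a ≠ 0) (hb : b ≠ 0) (p : ℕ) :
    (a * b).factorization p = a.factorization p + b.factorization p := by
  rw [Nat.factorization_mul ha hb]; simp

private lemma pval_le_of_dvd {p a b : ℕ} [Fact p.Prime] (h : a ∣ b) (hb : b ≠ 0) :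
    padicValNat p a ≤ padicValNat p b := by
  obtain ⟨c, rfl⟩ := h
  have ha : a ≠ 0 := fun h0 => hb (by rw [h0, zero_mul])
  have hc : c ≠ 0 := fun h0 => hb (by rw [h0, mul_zero])
  rw [padicValNat.mul ha hc]
  exact Nat.le_add_right _ _

private lemma sum_gap {b e : ℕ} (d g : ℕ → ℕ) (heb : e + 1 ≤ b)
    (h0 : ∀ i, d i ≤ g i) (h1 : ∀ i ∈ Ico 1 (e + 1), d i + 1 ≤ g i) :
    e + ∑ i ∈ Ico 1 b, d i ≤ ∑ i ∈ Ico 1 b, g i := by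
  rw [← Finset.sum_Ico_consecutive d (by omega : 1 ≤ e + 1) heb,
      ← Finset.sum_Ico_consecutive g (by omega : 1 ≤ e + 1) heb]
  have hA : ∑ i ∈ Ico 1 (e + 1), d i + e ≤ ∑ i ∈ Ico 1 (e + 1), g i := by
    have h2 : ∑ i ∈ Ico 1 (e + 1), (d i + 1) ≤ ∑ i ∈ Ico 1 (e + 1), g i :=
      Finset.sum_le_sum h1
    rw [Finset.sum_add_distrib, Finset.sum_const, Nat.card_Ico, smul_eq_mul] at h2
    omega
  have hB : ∑ i ∈ Ico (e + 1) b, d i ≤ ∑ i ∈ Ico (e + 1) b, g i :=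
    Finset.sum_le_sum fun i _ => h0 i
  omega

private lemma key_dvd (k m : ℕ) (hn : 1 ≤ k + m) :
    (2 * (k + m) - 1) * ((3 * k)! * (3 * m)! * (3 * (k + m))! * (2 * k)! * (2 * m)!) ∣
      (6 * k)! * (6 * m)! * (2 * (k + m))! := by
  have hf : ∀ x : ℕ, x ! ≠ 0 := fun x => (Nat.factorial_pos x).ne'
  have h21 : 2 * (k + m) - 1 ≠ 0 := by omega
  have hD : (2 * (k + m) - 1) * ((3 * k)! * (3 * m)! * (3 * (k + m))! * (2 * k)! * (2 * m)!) ≠ 0 := by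
    positivity
  have hN : (6 * k)! * (6 * m)! * (2 * (k + m))! ≠ 0 := by positivity
  rw [← Nat.factorization_le_iff_dvd hD hN, Finsupp.le_def]
  intro p
  rw [fact_mul_apply (by positivity) (hf _) p,
      fact_mul_apply h21 (by positivity) p,
      fact_mul_apply (by positivity) (hf _) p,
      fact_mul_apply (by positivity) (hf _) p,
      fact_mul_apply (hf _) (hf _) p,
      fact_mul_apply (by positivity) (hf _) p,
      fact_mul_apply (hf _) (hf _) p]
  by_cases hp : p.Prime
  · haveI : Fact p.Prime := ⟨hp⟩
    simp only [Nat.factorization_def _ hp]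
    by_cases hp3 : p = 3
    · subst hp3
      rw [show (6 : ℕ) * k = 3 * (2 * k) by ring, show (6 : ℕ) * m = 3 * (2 * m) by ring,
          padicValNat_factorial_mul k, padicValNat_factorial_mul m,
          padicValNat_factorial_mul (k + m), padicValNat_factorial_mul (2 * k),
          padicValNat_factorial_mul (2 * m)]
      have hle := pval_le_of_dvd (p := 3) (M_lemma k m hn) (hf _)
      have hprod : padicValNat 3 ((2 * (k + m) - 1) * (k ! * m ! * (k + m)!)) =
          padicValNat 3 (2 * (k + m) - 1) + (padicValNat 3 k ! + padicValNat 3 m !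
            + padicValNat 3 (k + m)!) := by
        rw [padicValNat.mul h21 (by positivity), padicValNat.mul (by positivity) (hf _),
            padicValNat.mul (hf _) (hf _)]
      rw [hprod] at hle
      omega
    · -- p ≠ 3
      set e := padicValNat p (2 * (k + m) - 1) with he
      set b := Nat.log p (6 * (k + m)) + e + 2 with hb
      have hlog : ∀ X : ℕ, X ≤ 6 * (k + m) → Nat.log p X < b :=
        fun X hX => lt_of_le_of_lt (Nat.log_mono_right hX) (by omega)
      rw [padicValNat_factorial (p := p) (n := 3 * k) (hlog _ (by omega)),
          padicValNat_factorial (p := p) (n := 3 * m) (hlog _ (by omega)),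
          padicValNat_factorial (p := p) (n := 3 * (k + m)) (hlog _ (by omega)),
          padicValNat_factorial (p := p) (n := 2 * k) (hlog _ (by omega)),
          padicValNat_factorial (p := p) (n := 2 * m) (hlog _ (by omega)),
          padicValNat_factorial (p := p) (n := 6 * k) (hlog _ (by omega)),
          padicValNat_factorial (p := p) (n := 6 * m) (hlog _ (by omega)),
          padicValNat_factorial (p := p) (n := 2 * (k + m)) (hlog _ (by omega))]
      have h0 : ∀ i : ℕ, (3 * k / p ^ i + 3 * m / p ^ i + 3 * (k + m) / p ^ i
          + 2 * k / p ^ i + 2 * m / p ^ i) ≤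
          (6 * k / p ^ i + 6 * m / p ^ i + 2 * (k + m) / p ^ i) := fun i => L0 (p ^ i) k m
      have h1 : ∀ i ∈ Ico 1 (e + 1), (3 * k / p ^ i + 3 * m / p ^ i + 3 * (k + m) / p ^ i
          + 2 * k / p ^ i + 2 * m / p ^ i) + 1 ≤
          (6 * k / p ^ i + 6 * m / p ^ i + 2 * (k + m) / p ^ i) := by
        intro i hi
        rw [Finset.mem_Ico] at hi
        have hie : i ≤ e := by omega
        have hi1 : i ≠ 0 := by omega
        have hdvd : p ^ i ∣ 2 * (k + m) - 1 :=
          dvd_trans (pow_dvd_pow p hie) pow_padicValNat_dvd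
        have hpd : p ∣ 2 * (k + m) - 1 :=
          dvd_trans (dvd_pow_self p hi1) hdvd
        have hp2 : p ≠ 2 := by
          rintro rfl
          obtain ⟨t, ht⟩ := hpd
          omega
        have hp4 : p ≠ 4 := by
          rintro rfl
          norm_num at hp
        have hp5 : 5 ≤ p := by
          have := hp.two_le
          omega
        have hq5 : 5 ≤ p ^ i := le_trans hp5 (Nat.le_self_pow hi1 p)
        have hq2 : p ^ i % 2 = 1 := by
          have hop : Odd p := hp.odd_of_ne_two hp2
          exact Nat.odd_iff.1 (hop.pow)
        exact L1 (p ^ i) k m hq5 hq2 hn hdvd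
      have main := sum_gap _ _ (show e + 1 ≤ b by omega) h0 h1
      have hd : ∑ i ∈ Ico 1 b, (3 * k / p ^ i + 3 * m / p ^ i + 3 * (k + m) / p ^ i
          + 2 * k / p ^ i + 2 * m / p ^ i) =
          (∑ i ∈ Ico 1 b, 3 * k / p ^ i) + (∑ i ∈ Ico 1 b, 3 * m / p ^ i)
          + (∑ i ∈ Ico 1 b, 3 * (k + m) / p ^ i) + (∑ i ∈ Ico 1 b, 2 * k / p ^ i)
          + (∑ i ∈ Ico 1 b, 2 * m / p ^ i) := by
        simp [Finset.sum_add_distrib]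
      have hg : ∑ i ∈ Ico 1 b, (6 * k / p ^ i + 6 * m / p ^ i + 2 * (k + m) / p ^ i) =
          (∑ i ∈ Ico 1 b, 6 * k / p ^ i) + (∑ i ∈ Ico 1 b, 6 * m / p ^ i)
          + (∑ i ∈ Ico 1 b, 2 * (k + m) / p ^ i) := by
        simp [Finset.sum_add_distrib]
      rw [hd, hg] at main
      omega
  · simp [Nat.factorization_eq_zero_of_not_prime _ hp]

theorem two_n_sub_one_dvd_quotient (n k : ℕ) (hn : 1 ≤ n) (hk : k ≤ n) :
    (Nat.factorial (3 * k) * Nat.factorial (3 * n - 3 * k) * Nat.factorial (3 * n) *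
        Nat.factorial (2 * k) * Nat.factorial (2 * n - 2 * k)) ∣
      (Nat.factorial (6 * k) * Nat.factorial (6 * n - 6 * k) * Nat.factorial (2 * n)) ∧
    (2 * n - 1) ∣
      (Nat.factorial (6 * k) * Nat.factorial (6 * n - 6 * k) * Nat.factorial (2 * n)) /
        (Nat.factorial (3 * k) * Nat.factorial (3 * n - 3 * k) * Nat.factorial (3 * n) *
          Nat.factorial (2 * k) * Nat.factorial (2 * n - 2 * k)) := by
  obtain ⟨m, rfl⟩ : ∃ m, n = k + m := ⟨n - k, by omega⟩
  rw [show 3 * (k + m) - 3 * k = 3 * m by omega, show 6 * (k + m) - 6 * k = 6 * m by omega,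
      show 2 * (k + m) - 2 * k = 2 * m by omega]
  have hkm : 1 ≤ k + m := hn
  have hkey := key_dvd k m hkm
  -- regroup the denominator
  obtain ⟨c, hc⟩ := hkey
  have hD : 0 < (3 * k)! * (3 * m)! * (3 * (k + m))! * (2 * k)! * (2 * m)! := by positivity
  constructor
  · exact ⟨(2 * (k + m) - 1) * c, by rw [hc]; ring⟩
  · have hdiv : (6 * k)! * (6 * m)! * (2 * (k + m))! /
        ((3 * k)! * (3 * m)! * (3 * (k + m))! * (2 * k)! * (2 * m)!) =
        (2 * (k + m) - 1) * c := by
      rw [hc, show (2 * (k + m) - 1) *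
          ((3 * k)! * (3 * m)! * (3 * (k + m))! * (2 * k)! * (2 * m)!) * c =
          ((3 * k)! * (3 * m)! * (3 * (k + m))! * (2 * k)! * (2 * m)!) *
          ((2 * (k + m) - 1) * c) by ring]
      exact Nat.mul_div_cancel_left _ hD
    rw [hdiv]
    exact Dvd.intro c rfl
end

section
/- For every integer n ≥ 1, the number (2n-1) divides the central-type binomial coefficient C(6n,3n). -/
open Finset Nat

lemma carry_lemma {q n : ℕ} (hq : Odd q) (h3 : 3 < q) (hdvd : q ∣ 6 * n - 3)
    (hn : 1 ≤ n) : q ≤ 3 * n % q + 3 * n % q := by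
  set r := 3 * n % q with hr
  have hq0 : 0 < q := by omega
  have h1 : r < q := Nat.mod_lt _ hq0
  have h6 : (6 * n) % q = 3 := by
    obtain ⟨c, hc⟩ := hdvd
    have : 6 * n = q * c + 3 := by omega
    rw [this, Nat.mul_add_mod, Nat.mod_eq_of_lt (by omega)]
  have h2 : (2 * r) % q = 3 := by
    have e1 : 2 * r % q = 2 * (3 * n) % q := by
      rw [hr, Nat.mul_mod, Nat.mod_mod_of_dvd _ (dvd_refl q), ← Nat.mul_mod]
    rw [e1, show 2 * (3 * n) = 6 * n by ring, h6]
  have hd := Nat.div_add_mod (2 * r) q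
  rw [h2] at hd
  have ht : 2 * r / q < 2 := by
    apply Nat.div_lt_of_lt_mul; omega
  obtain ⟨s, hs⟩ := hq
  interval_cases h : (2 * r / q) <;> omega

theorem two_n_sub_one_dvd_choose (n : ℕ) (hn : 1 ≤ n) :
    (2 * n - 1) ∣ Nat.choose (6 * n) (3 * n) := by
  rw [Nat.dvd_iff_prime_pow_dvd_dvd]
  intro p k hp hpk
  have hp' : p.Prime := hp
  rcases Nat.eq_zero_or_pos k with rfl | hk
  · simp
  have hodd : Odd (2 * n - 1) := by
    rw [Nat.odd_iff]; omega
  have hpodd : Odd p := by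
    rcases hp'.eq_two_or_odd' with rfl | h
    · exfalso
      have : (2 : ℕ) ∣ 2 * n - 1 := dvd_trans (dvd_pow_self 2 (by omega)) hpk
      rw [Nat.odd_iff] at hodd; omega
    · exact h
  -- abbreviations
  have hkn : 3 * n ≤ 6 * n := by omega
  set b := k + 2 + Nat.log p (6 * n) with hb
  have hlog : Nat.log p (6 * n) < b := by omega
  have hkum := Nat.Prime.emultiplicity_choose hp' hkn hlog
  -- the set of carry levels we exhibit
  set S : Finset ℕ := if p = 3 then Ico 2 (k + 2) else Ico 1 (k + 1) with hS
  have hsub : S ⊆ {i ∈ Ico 1 b | p ^ i ≤ 3 * n % p ^ i + (6 * n - 3 * n) % p ^ i} := by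
    intro i hi
    have h63 : 6 * n - 3 * n = 3 * n := by omega
    rw [mem_filter]
    have hdvd3 : p ^ i ∣ 6 * n - 3 := by
      have h6n3 : 6 * n - 3 = 3 * (2 * n - 1) := by omega
      rw [h6n3]
      by_cases h3 : p = 3
      · subst h3
        rw [hS, if_pos rfl, mem_Ico] at hi
        calc 3 ^ i = 3 * 3 ^ (i - 1) := by
              rw [← _root_.pow_succ']; congr 1; omega
          _ ∣ 3 * (2 * n - 1) :=
              mul_dvd_mul_left 3 (dvd_trans (pow_dvd_pow 3 (by omega)) hpk)
      · rw [hS, if_neg h3, mem_Ico] at hi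
        exact dvd_mul_of_dvd_right (dvd_trans (pow_dvd_pow p (by omega)) hpk) 3
    have hgt3 : 3 < p ^ i := by
      by_cases h3 : p = 3
      · subst h3
        rw [hS, if_pos rfl, mem_Ico] at hi
        calc 3 < 3 ^ 2 := by norm_num
          _ ≤ 3 ^ i := Nat.pow_le_pow_right (by norm_num) hi.1
      · rw [hS, if_neg h3, mem_Ico] at hi
        have hp5 : 5 ≤ p := by
          have h2le := hp'.two_le
          have hmod := Nat.odd_iff.mp hpodd
          omega
        calc 3 < 5 ^ 1 := by norm_num
          _ ≤ p ^ i := Nat.pow_le_pow_left (by omega) 1 |>.trans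
              (Nat.pow_le_pow_right (by omega) hi.1)
    have hqodd : Odd (p ^ i) := hpodd.pow
    have hcarry := carry_lemma hqodd hgt3 hdvd3 hn
    refine ⟨?_, by rw [h63]; exact hcarry⟩
    · rw [mem_Ico]
      constructor
      · by_cases h3 : p = 3 <;> simp [hS, h3, mem_Ico] at hi <;> omega
      · by_cases h3 : p = 3 <;> simp [hS, h3, mem_Ico] at hi <;> omega
  have hcardS : S.card = k := by
    by_cases h3 : p = 3 <;> simp [hS, h3]
  have hcard : k ≤ ({i ∈ Ico 1 b | p ^ i ≤ 3 * n % p ^ i + (6 * n - 3 * n) % p ^ i}).card := by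
    rw [← hcardS]; exact Finset.card_le_card hsub
  apply pow_dvd_of_le_emultiplicity
  rw [hkum]
  exact_mod_cast hcard
end

section
/- Let m ≥ 2 and 0 ≤ k ≤ n be integers. Then ⌊6k/m⌋ + ⌊(6n-6k)/m⌋ + ⌊2n/m⌋ + ⌊(2n-2)/m⌋ ≥ ⌊3k/m⌋ + ⌊(3n-3k)/m⌋ + ⌊3n/m⌋ + ⌊2k/m⌋ + ⌊(2n-2k)/m⌋ + ⌊(2n-1)/m⌋, unless m = 3, n ≡ 2 (mod 3), and k ≢ 1 (mod 3). -/
private lemma emod_mul_emod (c a M : ℤ) : (c * a) % M = (c * (a % M)) % M := by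
  rw [Int.mul_emod, Int.mul_emod c (a % M), Int.emod_emod_of_dvd a dvd_rfl]

private lemma emod_three_cases (a M : ℤ) (hM : 0 < M) (h0 : 0 ≤ a) (h3 : a < 3*M) :
    a % M = a ∨ a % M = a - M ∨ a % M = a - 2*M := by
  rcases lt_or_ge a M with h | h
  · exact Or.inl (Int.emod_eq_of_lt h0 h)
  rcases lt_or_ge a (2*M) with h2 | h2
  · refine Or.inr (Or.inl ?_)
    have e : (a - M) % M = a % M := by
      conv_rhs => rw [show a = (a - M) + M * 1 by ring, Int.add_mul_emod_self_left]
    rw [← e]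
    exact Int.emod_eq_of_lt (by omega) (by omega)
  · refine Or.inr (Or.inr ?_)
    have e : (a - 2*M) % M = a % M := by
      conv_rhs => rw [show a = (a - 2*M) + M * 2 by ring, Int.add_mul_emod_self_left]
    rw [← e]
    exact Int.emod_eq_of_lt (by omega) (by omega)

private lemma emod_shift_cases (a M : ℤ) (hM : 0 < M) (h0 : -M ≤ a) (h3 : a < 2*M) :
    a % M = a ∨ a % M = a - M ∨ a % M = a + M := by
  rcases lt_or_ge a 0 with h | h
  · refine Or.inr (Or.inr ?_)
    have e : (a + M) % M = a % M := by
      conv_rhs => rw [show a = (a + M) + M * (-1) by ring, Int.add_mul_emod_self_left]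
    rw [← e]
    exact Int.emod_eq_of_lt (by omega) (by omega)
  rcases lt_or_ge a M with h1 | h1
  · exact Or.inl (Int.emod_eq_of_lt h h1)
  · refine Or.inr (Or.inl ?_)
    have e : (a - M) % M = a % M := by
      conv_rhs => rw [show a = (a - M) + M * 1 by ring, Int.add_mul_emod_self_left]
    rw [← e]
    exact Int.emod_eq_of_lt (by omega) (by omega)

set_option maxHeartbeats 2000000 in
private theorem key_mods (M g u P Q C D E F G H P2 Q2 : ℤ)
    (hM : 2 ≤ M) (hg0 : 0 ≤ g) (hg1 : g < M) (hu0 : 0 ≤ u) (hu1 : u < M)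
    (hPd : P = 3*g ∨ P = 3*g - M ∨ P = 3*g - 2*M) (hP0 : 0 ≤ P) (hP1 : P < M)
    (hQd : Q = 3*u ∨ Q = 3*u - M ∨ Q = 3*u - 2*M) (hQ0 : 0 ≤ Q) (hQ1 : Q < M)
    (hCd : C = 2*g ∨ C = 2*g - M ∨ C = 2*g - 2*M) (hC0 : 0 ≤ C) (hC1 : C < M)
    (hDd : D = 2*u ∨ D = 2*u - M ∨ D = 2*u - 2*M) (hD0 : 0 ≤ D) (hD1 : D < M)
    (hEd : E = C + D ∨ E = C + D - M ∨ E = C + D - 2*M) (hE0 : 0 ≤ E) (hE1 : E < M)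
    (hFd : F = C + D - 1 ∨ F = C + D - 1 - M ∨ F = C + D - 1 + M) (hF0 : 0 ≤ F) (hF1 : F < M)
    (hGd : G = C + D - 2 ∨ G = C + D - 2 - M ∨ G = C + D - 2 + M) (hG0 : 0 ≤ G) (hG1 : G < M)
    (hHd : H = P + Q ∨ H = P + Q - M ∨ H = P + Q - 2*M) (hH0 : 0 ≤ H) (hH1 : H < M)
    (hP2d : P2 = 2*P ∨ P2 = 2*P - M ∨ P2 = 2*P - 2*M) (hP20 : 0 ≤ P2) (hP21 : P2 < M)
    (hQ2d : Q2 = 2*Q ∨ Q2 = 2*Q - M ∨ Q2 = 2*Q - 2*M) (hQ20 : 0 ≤ Q2) (hQ21 : Q2 < M)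
    (hex : ¬(M = 3 ∧ g + u = 2 ∧ g ≠ 1)) :
    P2 + Q2 + E + G + 1 ≤ P + Q + H + C + D + F := by
  rcases hCd with rfl | rfl | rfl <;> rcases hDd with rfl | rfl | rfl <;>
    rcases hEd with rfl | rfl | rfl <;> rcases hFd with rfl | rfl | rfl <;> omega

theorem floor_inequality_unless (m n k : ℕ) (hm : 2 ≤ m) (hk : k ≤ n)
    (h : ¬(m = 3 ∧ n % 3 = 2 ∧ k % 3 ≠ 1)) :
    ⌊(3 * (k : ℚ)) / m⌋ + ⌊(3 * (n : ℚ) - 3 * k) / m⌋ + ⌊(3 * (n : ℚ)) / m⌋ +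
        ⌊(2 * (k : ℚ)) / m⌋ + ⌊(2 * (n : ℚ) - 2 * k) / m⌋ + ⌊(2 * (n : ℚ) - 1) / m⌋ ≤
      ⌊(6 * (k : ℚ)) / m⌋ + ⌊(6 * (n : ℚ) - 6 * k) / m⌋ + ⌊(2 * (n : ℚ)) / m⌋ +
        ⌊(2 * (n : ℚ) - 2) / m⌋ := by
  rw [show (3 * (n:ℚ) - 3 * k) = ((3*(n:ℤ) - 3*(k:ℤ) : ℤ) : ℚ) by push_cast; ring,
      show (2 * (n:ℚ) - 2 * k) = ((2*(n:ℤ) - 2*(k:ℤ) : ℤ) : ℚ) by push_cast; ring,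
      show (2 * (n:ℚ) - 1) = ((2*(n:ℤ) - 1 : ℤ) : ℚ) by push_cast; ring,
      show (6 * (n:ℚ) - 6 * k) = ((6*(n:ℤ) - 6*(k:ℤ) : ℤ) : ℚ) by push_cast; ring,
      show (2 * (n:ℚ) - 2) = ((2*(n:ℤ) - 2 : ℤ) : ℚ) by push_cast; ring,
      show (3 * (k:ℚ)) = ((3*(k:ℤ) : ℤ) : ℚ) by push_cast; ring,
      show (3 * (n:ℚ)) = ((3*(n:ℤ) : ℤ) : ℚ) by push_cast; ring,
      show (2 * (k:ℚ)) = ((2*(k:ℤ) : ℤ) : ℚ) by push_cast; ring,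
      show (2 * (n:ℚ)) = ((2*(n:ℤ) : ℤ) : ℚ) by push_cast; ring,
      show (6 * (k:ℚ)) = ((6*(k:ℤ) : ℤ) : ℚ) by push_cast; ring]
  simp only [Rat.floor_intCast_div_natCast]
  set M : ℤ := (m : ℤ) with hMdef
  set K : ℤ := (k : ℤ) with hKdef
  set N : ℤ := (n : ℤ) with hNdef
  have hM2 : (2:ℤ) ≤ M := by rw [hMdef]; exact_mod_cast hm
  have hM0 : (0:ℤ) < M := by omega
  have hMne : M ≠ 0 := by omega
  -- reduce to an inequality on remainders
  suffices hmods : (6*K)%M + (6*N-6*K)%M + (2*N)%M + (2*N-2)%M + 1 ≤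
      (3*K)%M + (3*N-3*K)%M + (3*N)%M + (2*K)%M + (2*N-2*K)%M + (2*N-1)%M by
    have d1 := Int.mul_ediv_add_emod (3*K) M
    have d2 := Int.mul_ediv_add_emod (3*N-3*K) M
    have d3 := Int.mul_ediv_add_emod (3*N) M
    have d4 := Int.mul_ediv_add_emod (2*K) M
    have d5 := Int.mul_ediv_add_emod (2*N-2*K) M
    have d6 := Int.mul_ediv_add_emod (2*N-1) M
    have d7 := Int.mul_ediv_add_emod (6*K) M
    have d8 := Int.mul_ediv_add_emod (6*N-6*K) M
    have d9 := Int.mul_ediv_add_emod (2*N) M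
    have d10 := Int.mul_ediv_add_emod (2*N-2) M
    have eL : M * ((3*K)/M + (3*N-3*K)/M + (3*N)/M + (2*K)/M + (2*N-2*K)/M + (2*N-1)/M)
        = 10*N - 1 - ((3*K)%M + (3*N-3*K)%M + (3*N)%M + (2*K)%M + (2*N-2*K)%M + (2*N-1)%M) := by
      linear_combination d1 + d2 + d3 + d4 + d5 + d6
    have eR : M * ((6*K)/M + (6*N-6*K)/M + (2*N)/M + (2*N-2)/M)
        = 10*N - 2 - ((6*K)%M + (6*N-6*K)%M + (2*N)%M + (2*N-2)%M) := by
      linear_combination d7 + d8 + d9 + d10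
    exact le_of_mul_le_mul_left (by linarith) hM0
  -- residues of k and n-k
  have hg0 : 0 ≤ K % M := Int.emod_nonneg _ hMne
  have hg1 : K % M < M := Int.emod_lt_of_pos _ hM0
  have hu0 : 0 ≤ (N - K) % M := Int.emod_nonneg _ hMne
  have hu1 : (N - K) % M < M := Int.emod_lt_of_pos _ hM0
  have h3k : (3*K) % M = (3*(K % M)) % M := emod_mul_emod 3 K M
  have h3nk : (3*N-3*K) % M = (3*((N-K) % M)) % M := by
    rw [show 3*N-3*K = 3*(N-K) by ring]; exact emod_mul_emod 3 (N-K) M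
  have h2k : (2*K) % M = (2*(K % M)) % M := emod_mul_emod 2 K M
  have h2nk : (2*N-2*K) % M = (2*((N-K) % M)) % M := by
    rw [show 2*N-2*K = 2*(N-K) by ring]; exact emod_mul_emod 2 (N-K) M
  have h3n : (3*N) % M = ((3*(K % M)) % M + (3*((N-K) % M)) % M) % M := by
    rw [show 3*N = 3*K + (3*N-3*K) by ring, Int.add_emod, h3k, h3nk]
  have h2n : (2*N) % M = ((2*(K % M)) % M + (2*((N-K) % M)) % M) % M := by
    rw [show 2*N = 2*K + (2*N-2*K) by ring, Int.add_emod, h2k, h2nk]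
  have h6k : (6*K) % M = (2*((3*(K % M)) % M)) % M := by
    rw [show 6*K = 2*(3*K) by ring, emod_mul_emod 2 (3*K) M, h3k]
  have h6nk : (6*N-6*K) % M = (2*((3*((N-K) % M)) % M)) % M := by
    rw [show 6*N-6*K = 2*(3*N-3*K) by ring, emod_mul_emod 2 (3*N-3*K) M, h3nk]
  have h2n1 : (2*N-1) % M = ((2*(K % M)) % M + (2*((N-K) % M)) % M - 1) % M := by
    rw [Int.sub_emod (2*N) 1 M, h2n, ← Int.sub_emod]
  have h2n2 : (2*N-2) % M = ((2*(K % M)) % M + (2*((N-K) % M)) % M - 2) % M := by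
    rw [Int.sub_emod (2*N) 2 M, h2n, ← Int.sub_emod]
  rw [h3k, h3nk, h3n, h2k, h2nk, h2n1, h6k, h6nk, h2n, h2n2]
  -- abbreviations
  have hP0 : 0 ≤ (3*(K % M)) % M := Int.emod_nonneg _ hMne
  have hP1 : (3*(K % M)) % M < M := Int.emod_lt_of_pos _ hM0
  have hQ0 : 0 ≤ (3*((N-K) % M)) % M := Int.emod_nonneg _ hMne
  have hQ1 : (3*((N-K) % M)) % M < M := Int.emod_lt_of_pos _ hM0
  have hC0 : 0 ≤ (2*(K % M)) % M := Int.emod_nonneg _ hMne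
  have hC1 : (2*(K % M)) % M < M := Int.emod_lt_of_pos _ hM0
  have hD0 : 0 ≤ (2*((N-K) % M)) % M := Int.emod_nonneg _ hMne
  have hD1 : (2*((N-K) % M)) % M < M := Int.emod_lt_of_pos _ hM0
  have hex : ¬(M = 3 ∧ (K % M) + ((N - K) % M) = 2 ∧ (K % M) ≠ 1) := by
    rintro ⟨h3, hsum, hne⟩
    apply h
    have hm3 : m = 3 := by rw [hMdef] at h3; exact_mod_cast h3
    subst hm3
    rw [hMdef] at hsum hne
    rw [hKdef] at hsum hne
    rw [hNdef] at hsum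
    refine ⟨rfl, ?_, ?_⟩ <;> omega
  refine key_mods M (K % M) ((N-K) % M) _ _ _ _ _ _ _ _ _ _ hM2 hg0 hg1 hu0 hu1
    (emod_three_cases _ M hM0 (by linarith) (by linarith)) hP0 hP1
    (emod_three_cases _ M hM0 (by linarith) (by linarith)) hQ0 hQ1
    (emod_three_cases _ M hM0 (by linarith) (by linarith)) hC0 hC1
    (emod_three_cases _ M hM0 (by linarith) (by linarith)) hD0 hD1
    (emod_three_cases _ M hM0 (by linarith) (by linarith)) (Int.emod_nonneg _ hMne) (Int.emod_lt_of_pos _ hM0)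
    (emod_shift_cases _ M hM0 (by linarith) (by linarith)) (Int.emod_nonneg _ hMne) (Int.emod_lt_of_pos _ hM0)
    (emod_shift_cases _ M hM0 (by linarith) (by linarith)) (Int.emod_nonneg _ hMne) (Int.emod_lt_of_pos _ hM0)
    (emod_three_cases _ M hM0 (by linarith) (by linarith)) (Int.emod_nonneg _ hMne) (Int.emod_lt_of_pos _ hM0)
    (emod_three_cases _ M hM0 (by linarith) (by linarith)) (Int.emod_nonneg _ hMne) (Int.emod_lt_of_pos _ hM0)
    (emod_three_cases _ M hM0 (by linarith) (by linarith)) (Int.emod_nonneg _ hMne) (Int.emod_lt_of_pos _ hM0)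
    hex
end

section
/- Let m ≥ 2 and 0 ≤ k ≤ n be integers. Then ⌊6k/m⌋ + ⌊(6n-6k)/m⌋ + ⌊2n/m⌋ ≥ ⌊3k/m⌋ + ⌊(3n-3k)/m⌋ + ⌊3n/m⌋ + ⌊2k/m⌋ + ⌊(2n-2k)/m⌋. -/
lemma floor_add_floor_le' (x y : ℚ) : ⌊x⌋ + ⌊y⌋ ≤ ⌊x + y⌋ := by
  apply Int.le_floor.mpr
  push_cast
  exact add_le_add (Int.floor_le x) (Int.floor_le y)

lemma hermite_aux (x y : ℚ) (h : Int.fract x ≤ Int.fract y) :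
    ⌊x⌋ + ⌊y⌋ + ⌊x + y⌋ ≤ ⌊2 * x⌋ + ⌊2 * y⌋ := by
  have hx : (2:ℚ) * x = ((2 * ⌊x⌋ : ℤ) : ℚ) + 2 * Int.fract x := by
    rw [Int.fract]; push_cast; ring
  have hy : (2:ℚ) * y = ((2 * ⌊y⌋ : ℤ) : ℚ) + 2 * Int.fract y := by
    rw [Int.fract]; push_cast; ring
  have hxy : x + y = ((⌊x⌋ + ⌊y⌋ : ℤ) : ℚ) + (Int.fract x + Int.fract y) := by
    rw [Int.fract, Int.fract]; push_cast; ring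
  rw [hx, hy, hxy, Int.floor_intCast_add, Int.floor_intCast_add, Int.floor_intCast_add]
  have h1 : ⌊Int.fract x + Int.fract y⌋ ≤ ⌊2 * Int.fract y⌋ :=
    Int.floor_le_floor (by linarith)
  have h2 : (0:ℤ) ≤ ⌊2 * Int.fract x⌋ :=
    Int.floor_nonneg.mpr (by linarith [Int.fract_nonneg x])
  omega

lemma hermite (x y : ℚ) : ⌊x⌋ + ⌊y⌋ + ⌊x + y⌋ ≤ ⌊2 * x⌋ + ⌊2 * y⌋ := by
  rcases le_total (Int.fract x) (Int.fract y) with h | h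
  · exact hermite_aux x y h
  · have := hermite_aux y x h
    rw [add_comm y x] at this
    omega

theorem floor_inequality_short (m n k : ℕ) (hm : 2 ≤ m) (hk : k ≤ n) :
    ⌊(3 * (k : ℚ)) / m⌋ + ⌊(3 * (n : ℚ) - 3 * k) / m⌋ + ⌊(3 * (n : ℚ)) / m⌋ +
        ⌊(2 * (k : ℚ)) / m⌋ + ⌊(2 * (n : ℚ) - 2 * k) / m⌋ ≤
      ⌊(6 * (k : ℚ)) / m⌋ + ⌊(6 * (n : ℚ) - 6 * k) / m⌋ + ⌊(2 * (n : ℚ)) / m⌋ := by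
  have e1 : (6 * (k : ℚ)) / m = 2 * ((3 * (k : ℚ)) / m) := by ring
  have e2 : (6 * (n : ℚ) - 6 * k) / m = 2 * ((3 * (n : ℚ) - 3 * k) / m) := by ring
  have e3 : (3 * (n : ℚ)) / m = (3 * (k : ℚ)) / m + (3 * (n : ℚ) - 3 * k) / m := by ring
  have e4 : (2 * (n : ℚ)) / m = (2 * (k : ℚ)) / m + (2 * (n : ℚ) - 2 * k) / m := by ring
  rw [e1, e2, e3, e4]
  have h1 := hermite ((3 * (k : ℚ)) / m) ((3 * (n : ℚ) - 3 * k) / m)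
  have h2 := floor_add_floor_le' ((2 * (k : ℚ)) / m) ((2 * (n : ℚ) - 2 * k) / m)
  omega
end

section
/- For every prime p and all integers 0 ≤ k ≤ n with n ≥ 1, the p-adic valuations of factorials satisfy ord_p((6k)!) + ord_p((6n-6k)!) + ord_p((2n)!) + ord_p((2n-2)!) ≥ ord_p((3k)!) + ord_p((3n-3k)!) + ord_p((3n)!) + ord_p((2k)!) + ord_p((2n-2k)!) + ord_p((2n-1)!). -/
lemma my_div_add_div_le (a b q : ℕ) : a / q + b / q ≤ (a + b) / q := by
  rcases Nat.eq_zero_or_pos q with h | h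
  · simp [h]
  · rw [Nat.le_div_iff_mul_le h, Nat.add_mul]
    exact Nat.add_le_add (Nat.div_mul_le_self a q) (Nat.div_mul_le_self b q)

lemma my_ts (q a b : ℕ) (hq : 0 < q) :
    a / q + b / q + (a + b) / q ≤ 2 * a / q + 2 * b / q := by
  obtain ⟨α, r, ha, hr⟩ : ∃ α r, a = q * α + r ∧ r < q :=
    ⟨a / q, a % q, (Nat.div_add_mod a q).symm, Nat.mod_lt _ hq⟩
  obtain ⟨β, s, hb, hs⟩ : ∃ β s, b = q * β + s ∧ s < q :=
    ⟨b / q, b % q, (Nat.div_add_mod b q).symm, Nat.mod_lt _ hq⟩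
  have h1 : a / q = α := by rw [ha, Nat.mul_add_div hq, Nat.div_eq_of_lt hr, Nat.add_zero]
  have h2 : b / q = β := by rw [hb, Nat.mul_add_div hq, Nat.div_eq_of_lt hs, Nat.add_zero]
  have h3 : (a + b) / q = α + β + (r + s) / q := by
    rw [show a + b = q * (α + β) + (r + s) by rw [ha, hb]; ring, Nat.mul_add_div hq]
  have h4 : 2 * a / q = 2 * α + 2 * r / q := by
    rw [show 2 * a = q * (2 * α) + 2 * r by rw [ha]; ring, Nat.mul_add_div hq]
  have h5 : 2 * b / q = 2 * β + 2 * s / q := by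
    rw [show 2 * b = q * (2 * β) + 2 * s by rw [hb]; ring, Nat.mul_add_div hq]
  rw [h1, h2, h3, h4, h5]
  have h6 : (r + s) / q < 2 := by rw [Nat.div_lt_iff_lt_mul hq]; omega
  have h7 : q ≤ r + s → (q ≤ 2 * r ∨ q ≤ 2 * s) := by omega
  have h8 : q ≤ r + s → 1 ≤ 2 * r / q ∨ 1 ≤ 2 * s / q := by
    intro h
    rcases h7 h with h' | h'
    · exact Or.inl ((Nat.one_le_div_iff hq).mpr h')
    · exact Or.inr ((Nat.one_le_div_iff hq).mpr h')
  rcases Nat.lt_or_ge (r + s) q with h | h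
  · rw [Nat.div_eq_of_lt h]
    have := Nat.zero_le (2 * r / q)
    have := Nat.zero_le (2 * s / q)
    linarith
  · have h9 : (r + s) / q ≤ 1 := Nat.lt_succ_iff.mp h6
    rcases h8 h with h' | h' <;>
    · have := Nat.zero_le (2 * r / q)
      have := Nat.zero_le (2 * s / q)
      linarith

lemma my_b2core (q k m : ℕ) (hq5 : 5 ≤ q) (hodd : q % 2 = 1)
    (hku : 2 * k % q = 0) (hmv : 2 * m % q = 1) :
    3 * k / q + 3 * m / q + 3 * (k + m) / q + 2 * k / q + 2 * m / q + (2 * (k + m) - 1) / q ≤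
      6 * k / q + 6 * m / q + 2 * (k + m) / q + (2 * (k + m) - 2) / q := by
  have q0 : 0 < q := by omega
  -- q ∣ k
  have hq2 : Nat.Coprime q 2 := by
    rw [Nat.coprime_two_right, Nat.odd_iff]; exact hodd
  obtain ⟨a, rfl⟩ : ∃ a, k = q * a := by
    have h2k : q ∣ 2 * k := Nat.dvd_of_mod_eq_zero hku
    exact (Nat.Coprime.dvd_of_dvd_mul_left hq2 h2k)
  obtain ⟨β, s, hs3, hslt⟩ : ∃ β s, 3 * m = q * β + s ∧ s < q :=
    ⟨3 * m / q, 3 * m % q, (Nat.div_add_mod _ q).symm, Nat.mod_lt _ q0⟩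
  obtain ⟨μ, h2m⟩ : ∃ μ, 2 * m = q * μ + 1 := by
    refine ⟨2 * m / q, ?_⟩
    have := Nat.div_add_mod (2 * m) q
    omega
  -- μ ≥ 1 (parity), so μ = w + 1
  obtain ⟨w, rfl⟩ : ∃ w, μ = w + 1 := by
    refine ⟨μ - 1, ?_⟩
    rcases Nat.eq_zero_or_pos μ with h | h
    · subst h; rw [Nat.mul_zero] at h2m; omega
    · omega
  -- 2s = q + 3
  have h2s : 2 * s = q + 3 := by
    have e1 : (2 * s) % q = 3 := by
      have b1 : 6 * m = q * (2 * β) + 2 * s := by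
        have : q * (2 * β) = 2 * (q * β) := by ring
        omega
      have b2 : 6 * m = q * (3 * (w + 1)) + 3 := by
        have : q * (3 * (w + 1)) = 3 * (q * (w + 1)) := by ring
        omega
      have : (q * (2 * β) + 2 * s) % q = (q * (3 * (w + 1)) + 3) % q := by rw [← b1, ← b2]
      rwa [Nat.mul_add_mod, Nat.mul_add_mod, Nat.mod_eq_of_lt (show 3 < q by omega)] at this
    obtain ⟨c, hc, hclt⟩ : ∃ c, 2 * s = q * c + 3 ∧ c < 2 := by
      refine ⟨2 * s / q, ?_, by rw [Nat.div_lt_iff_lt_mul q0]; omega⟩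
      have := Nat.div_add_mod (2 * s) q
      omega
    have : c = 0 ∨ c = 1 := by omega
    rcases this with h | h <;> subst h
    · rw [Nat.mul_zero] at hc; omega
    · rw [Nat.mul_one] at hc; omega
  -- compute all the divisions
  have d1 : 3 * (q * a) / q = 3 * a := by
    rw [show 3 * (q * a) = q * (3 * a) by ring, Nat.mul_div_cancel_left _ q0]
  have d2 : 6 * (q * a) / q = 6 * a := by
    rw [show 6 * (q * a) = q * (6 * a) by ring, Nat.mul_div_cancel_left _ q0]
  have d3 : 2 * (q * a) / q = 2 * a := by
    rw [show 2 * (q * a) = q * (2 * a) by ring, Nat.mul_div_cancel_left _ q0]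
  have d4 : 3 * m / q = β := by
    rw [hs3, Nat.mul_add_div q0, Nat.div_eq_of_lt hslt, Nat.add_zero]
  have d5 : 6 * m / q = 2 * β + 1 := by
    have e : 6 * m = q * (2 * β + 1) + 3 := by
      have b1 : q * (2 * β + 1) = 2 * (q * β) + q := by ring
      omega
    rw [e, Nat.mul_add_div q0, Nat.div_eq_of_lt (show 3 < q by omega), Nat.add_zero]
  have d6 : 2 * m / q = w + 1 := by
    rw [h2m, Nat.mul_add_div q0, Nat.div_eq_of_lt (show 1 < q by omega), Nat.add_zero]
  have d7 : 3 * (q * a + m) / q = 3 * a + β := by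
    have e : 3 * (q * a + m) = q * (3 * a + β) + s := by
      have b1 : q * (3 * a + β) = 3 * (q * a) + q * β := by ring
      omega
    rw [e, Nat.mul_add_div q0, Nat.div_eq_of_lt hslt, Nat.add_zero]
  have d8 : 2 * (q * a + m) / q = 2 * a + w + 1 := by
    have e : 2 * (q * a + m) = q * (2 * a + w + 1) + 1 := by
      have b1 : q * (2 * a + w + 1) = 2 * (q * a) + q * (w + 1) := by ring
      omega
    rw [e, Nat.mul_add_div q0, Nat.div_eq_of_lt (show 1 < q by omega), Nat.add_zero]
  have d9 : (2 * (q * a + m) - 1) / q = 2 * a + w + 1 := by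
    have e : 2 * (q * a + m) - 1 = q * (2 * a + w + 1) := by
      have b1 : q * (2 * a + w + 1) = 2 * (q * a) + q * (w + 1) := by ring
      omega
    rw [e, Nat.mul_div_cancel_left _ q0]
  have d10 : (2 * (q * a + m) - 2) / q = 2 * a + w := by
    have e : 2 * (q * a + m) - 2 = q * (2 * a + w) + (q - 1) := by
      have b1 : q * (2 * a + w) + q = 2 * (q * a) + q * (w + 1) := by ring
      omega
    rw [e, Nat.mul_add_div q0, Nat.div_eq_of_lt (show q - 1 < q by omega), Nat.add_zero]
  rw [d1, d2, d3, d4, d5, d6, d7, d8, d9, d10]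
  omega

lemma my_keyq (q k m : ℕ) (hq : 2 ≤ q) (hne : q ≠ 3) (hn : 1 ≤ k + m) :
    3 * k / q + 3 * m / q + 3 * (k + m) / q + 2 * k / q + 2 * m / q + (2 * (k + m) - 1) / q ≤
      6 * k / q + 6 * m / q + 2 * (k + m) / q + (2 * (k + m) - 2) / q := by
  have q0 : 0 < q := by omega
  have e3 := my_ts q (3 * k) (3 * m) q0
  rw [show 3 * k + 3 * m = 3 * (k + m) by ring, show 2 * (3 * k) = 6 * k by ring,
      show 2 * (3 * m) = 6 * m by ring] at e3
  by_cases hdvd : q ∣ (2 * (k + m) - 1)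
  · -- q divides 2n-1 : q is odd, ≥ 5
    have hodd : q % 2 = 1 := by
      rcases Nat.even_or_odd q with he | ho
      · exfalso
        obtain ⟨e, rfl⟩ := he
        obtain ⟨c, hc⟩ := hdvd
        rw [show (e + e) * c = 2 * (e * c) by ring] at hc
        omega
      · exact Nat.odd_iff.mp ho
    have hq5 : 5 ≤ q := by omega
    obtain ⟨t, ht⟩ := hdvd
    have ht1 : t ≠ 0 := by rintro rfl; rw [Nat.mul_zero] at ht; omega
    obtain ⟨w, rfl⟩ : ∃ w, t = w + 1 := ⟨t - 1, by omega⟩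
    -- residues
    have hu := Nat.div_add_mod (2 * k) q
    have hv := Nat.div_add_mod (2 * m) q
    have hulr := Nat.mod_lt (2 * k) q0
    have hvlr := Nat.mod_lt (2 * m) q0
    have huv : 2 * k % q + 2 * m % q = 1 ∨ 2 * k % q + 2 * m % q = q + 1 := by
      have h1 : (2 * k % q + 2 * m % q) % q = 1 := by
        rw [← Nat.add_mod]
        have e : 2 * k + 2 * m = q * (w + 1) + 1 := by omega
        rw [e, Nat.mul_add_mod, Nat.mod_eq_of_lt (show 1 < q by omega)]
      obtain ⟨c, hc, hclt⟩ : ∃ c, 2 * k % q + 2 * m % q = q * c + 1 ∧ c < 2 := by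
        refine ⟨(2 * k % q + 2 * m % q) / q, ?_, by rw [Nat.div_lt_iff_lt_mul q0]; omega⟩
        have := Nat.div_add_mod (2 * k % q + 2 * m % q) q
        omega
      have : c = 0 ∨ c = 1 := by omega
      rcases this with h | h <;> subst h
      · rw [Nat.mul_zero] at hc; omega
      · rw [Nat.mul_one] at hc; omega
    rcases huv with h1 | h1
    · -- no carry: one residue is 0, the other 1
      have h2 : (2 * k % q = 0 ∧ 2 * m % q = 1) ∨ (2 * k % q = 1 ∧ 2 * m % q = 0) := by omega
      rcases h2 with ⟨ha, hb⟩ | ⟨ha, hb⟩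
      · exact my_b2core q k m hq5 hodd ha hb
      · have H := my_b2core q m k hq5 hodd hb ha
        rw [Nat.add_comm m k] at H
        linarith
    · -- carry case
      have d8 : 2 * (k + m) / q = w + 1 := by
        rw [show 2 * (k + m) = q * (w + 1) + 1 by omega, Nat.mul_add_div q0,
            Nat.div_eq_of_lt (show 1 < q by omega), Nat.add_zero]
      have d9 : (2 * (k + m) - 1) / q = w + 1 := by
        rw [ht, Nat.mul_div_cancel_left _ q0]
      have d10 : (2 * (k + m) - 2) / q = w := by
        have e : 2 * (k + m) - 2 = q * w + (q - 1) := by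
          have b1 : q * w + q = q * (w + 1) := by ring
          omega
        rw [e, Nat.mul_add_div q0, Nat.div_eq_of_lt (show q - 1 < q by omega), Nat.add_zero]
      have dC : 2 * k / q + 2 * m / q = w := by
        have hX : q * (2 * k / q + 2 * m / q) = q * w := by
          have b1 : q * (2 * k / q + 2 * m / q) = q * (2 * k / q) + q * (2 * m / q) := by ring
          have b2 : q * (w + 1) = q * w + q := by ring
          omega
        exact Nat.eq_of_mul_eq_mul_left q0 hX
      rw [d8, d9, d10]
      linarith
  · -- q does not divide 2n-1
    have e1 : (2 * (k + m) - 1) / q = (2 * (k + m) - 2) / q := by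
      rw [show 2 * (k + m) - 1 = (2 * (k + m) - 2) + 1 by omega, Nat.succ_div,
          if_neg (by rw [show 2 * (k + m) - 2 + 1 = 2 * (k + m) - 1 by omega]; exact hdvd)]
      simp
    have e2 : 2 * k / q + 2 * m / q ≤ 2 * (k + m) / q := by
      have := my_div_add_div_le (2 * k) (2 * m) q
      rwa [show 2 * k + 2 * m = 2 * (k + m) by ring] at this
    rw [e1]
    linarith

lemma my_p1 (q k m : ℕ) (hq : 2 ≤ q) (hn : 1 ≤ k + m) :
    k / q + m / q + (k + m) / q + (2 * (k + m) - 1) / q ≤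
      2 * (k + m) / q + (2 * (k + m) - 2) / q := by
  have q0 : 0 < q := by omega
  have e0 : k / q + m / q ≤ (k + m) / q := my_div_add_div_le k m q
  obtain ⟨α, r, hnr, hr⟩ : ∃ α r, k + m = q * α + r ∧ r < q :=
    ⟨(k + m) / q, (k + m) % q, (Nat.div_add_mod _ q).symm, Nat.mod_lt _ q0⟩
  have dn : (k + m) / q = α := by
    rw [hnr, Nat.mul_add_div q0, Nat.div_eq_of_lt hr, Nat.add_zero]
  rcases Nat.eq_zero_or_pos r with hr0 | hr1
  · subst hr0
    have hα : 1 ≤ α := by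
      rcases Nat.eq_zero_or_pos α with h | h
      · subst h; rw [Nat.mul_zero] at hnr; omega
      · exact h
    obtain ⟨γ, rfl⟩ : ∃ γ, α = γ + 1 := ⟨α - 1, by omega⟩
    have d1 : 2 * (k + m) / q = 2 * γ + 2 := by
      rw [show 2 * (k + m) = q * (2 * γ + 2) by
            rw [hnr]; ring, Nat.mul_div_cancel_left _ q0]
    have d2 : (2 * (k + m) - 1) / q = 2 * γ + 1 := by
      have e : 2 * (k + m) - 1 = q * (2 * γ + 1) + (q - 1) := by
        have b1 : q * (2 * γ + 1) + q = q * (2 * γ + 2) := by ring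
        have b2 : 2 * (k + m) = q * (2 * γ + 2) := by rw [hnr]; ring
        omega
      rw [e, Nat.mul_add_div q0, Nat.div_eq_of_lt (show q - 1 < q by omega), Nat.add_zero]
    have d3 : (2 * (k + m) - 2) / q = 2 * γ + 1 := by
      have e : 2 * (k + m) - 2 = q * (2 * γ + 1) + (q - 2) := by
        have b1 : q * (2 * γ + 1) + q = q * (2 * γ + 2) := by ring
        have b2 : 2 * (k + m) = q * (2 * γ + 2) := by rw [hnr]; ring
        omega
      rw [e, Nat.mul_add_div q0, Nat.div_eq_of_lt (show q - 2 < q by omega), Nat.add_zero]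
    rw [dn] at e0
    rw [d1, d2, d3, dn]
    linarith
  · have d1 : 2 * (k + m) / q = 2 * α + 2 * r / q := by
      rw [show 2 * (k + m) = q * (2 * α) + 2 * r by rw [hnr]; ring, Nat.mul_add_div q0]
    have d2 : (2 * (k + m) - 1) / q = 2 * α + (2 * r - 1) / q := by
      have e : 2 * (k + m) - 1 = q * (2 * α) + (2 * r - 1) := by
        have b2 : 2 * (k + m) = q * (2 * α) + 2 * r := by rw [hnr]; ring
        omega
      rw [e, Nat.mul_add_div q0]
    have d3 : (2 * (k + m) - 2) / q = 2 * α + (2 * r - 2) / q := by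
      have e : 2 * (k + m) - 2 = q * (2 * α) + (2 * r - 2) := by
        have b2 : 2 * (k + m) = q * (2 * α) + 2 * r := by rw [hnr]; ring
        omega
      rw [e, Nat.mul_add_div q0]
    have d4 : (2 * r - 1) / q ≤ 2 * r / q := Nat.div_le_div_right (by omega)
    have d5 := Nat.zero_le ((2 * r - 2) / q)
    rw [dn] at e0
    rw [d1, d2, d3, dn]
    linarith



theorem padic_val_factorial_inequality (p n k : ℕ) (hp : p.Prime) (hn : 1 ≤ n)
    (hk : k ≤ n) :
    (Nat.factorial (3 * k)).factorization p +
        (Nat.factorial (3 * n - 3 * k)).factorization p +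
        (Nat.factorial (3 * n)).factorization p +
        (Nat.factorial (2 * k)).factorization p +
        (Nat.factorial (2 * n - 2 * k)).factorization p +
        (Nat.factorial (2 * n - 1)).factorization p ≤
      (Nat.factorial (6 * k)).factorization p +
        (Nat.factorial (6 * n - 6 * k)).factorization p +
        (Nat.factorial (2 * n)).factorization p +
        (Nat.factorial (2 * n - 2)).factorization p := by
  haveI := Fact.mk hp
  obtain ⟨m, rfl⟩ : ∃ m, n = k + m := ⟨n - k, by omega⟩
  rw [show 3 * (k + m) - 3 * k = 3 * m by omega,
      show 2 * (k + m) - 2 * k = 2 * m by omega,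
      show 6 * (k + m) - 6 * k = 6 * m by omega]
  have hfd : ∀ x : ℕ, (Nat.factorial x).factorization p = padicValNat p (Nat.factorial x) :=
    fun x => Nat.factorization_def _ hp
  simp only [hfd]
  by_cases h3 : p = 3
  · subst h3
    rw [show 6 * k = 3 * (2 * k) by ring, show 6 * m = 3 * (2 * m) by ring]
    simp only [padicValNat_factorial_mul]
    have L : ∀ x : ℕ, x ≤ 2 * (k + m) →
        padicValNat 3 (Nat.factorial x) = ∑ i ∈ Finset.Ico 1 (2 * (k + m) + 1), x / 3 ^ i :=
      fun x hx => padicValNat_factorial (lt_of_le_of_lt (Nat.log_le_self 3 x) (by omega))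
    rw [L k (by omega), L m (by omega), L (k + m) (by omega), L (2 * (k + m) - 1) (by omega),
        L (2 * (k + m)) (by omega), L (2 * (k + m) - 2) (by omega)]
    have key : (∑ i ∈ Finset.Ico 1 (2 * (k + m) + 1), k / 3 ^ i) +
        (∑ i ∈ Finset.Ico 1 (2 * (k + m) + 1), m / 3 ^ i) +
        (∑ i ∈ Finset.Ico 1 (2 * (k + m) + 1), (k + m) / 3 ^ i) +
        (∑ i ∈ Finset.Ico 1 (2 * (k + m) + 1), (2 * (k + m) - 1) / 3 ^ i) ≤
        (∑ i ∈ Finset.Ico 1 (2 * (k + m) + 1), 2 * (k + m) / 3 ^ i) +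
        (∑ i ∈ Finset.Ico 1 (2 * (k + m) + 1), (2 * (k + m) - 2) / 3 ^ i) := by
      rw [← Finset.sum_add_distrib, ← Finset.sum_add_distrib, ← Finset.sum_add_distrib,
          ← Finset.sum_add_distrib]
      apply Finset.sum_le_sum
      intro i hi
      have hi1 : 1 ≤ i := (Finset.mem_Ico.mp hi).1
      have hq : 2 ≤ 3 ^ i := le_trans (by norm_num) (Nat.le_self_pow (by omega) 3)
      exact my_p1 (3 ^ i) k m hq (by omega)
    linarith
  · have L : ∀ x : ℕ, x ≤ 6 * (k + m) →
        padicValNat p (Nat.factorial x) = ∑ i ∈ Finset.Ico 1 (6 * (k + m) + 1), x / p ^ i :=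
      fun x hx => padicValNat_factorial (lt_of_le_of_lt (Nat.log_le_self p x) (by omega))
    rw [L (3 * k) (by omega), L (3 * m) (by omega), L (3 * (k + m)) (by omega),
        L (2 * k) (by omega), L (2 * m) (by omega), L (2 * (k + m) - 1) (by omega),
        L (6 * k) (by omega), L (6 * m) (by omega), L (2 * (k + m)) (by omega),
        L (2 * (k + m) - 2) (by omega)]
    rw [← Finset.sum_add_distrib, ← Finset.sum_add_distrib, ← Finset.sum_add_distrib,
        ← Finset.sum_add_distrib, ← Finset.sum_add_distrib, ← Finset.sum_add_distrib,
        ← Finset.sum_add_distrib, ← Finset.sum_add_distrib]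
    apply Finset.sum_le_sum
    intro i hi
    have hi1 : 1 ≤ i := (Finset.mem_Ico.mp hi).1
    have hq : 2 ≤ p ^ i := le_trans hp.two_le (Nat.le_self_pow (by omega) p)
    have hne : p ^ i ≠ 3 := by
      intro hqe
      have hd : p ∣ 3 := hqe ▸ dvd_pow_self p (by omega : i ≠ 0)
      exact h3 ((Nat.prime_dvd_prime_iff_eq hp Nat.prime_three).mp hd)
    exact my_keyq (p ^ i) k m hq hne (by omega)
end

section
/- For all integers 0 ≤ k ≤ n with n ≥ 1, the 3-adic valuations of factorials satisfy ord_3((2n)!) + ord_3((2n-2)!) ≥ ord_3(k!) + ord_3((n-k)!) + ord_3(n!) + ord_3((2n-1)!). -/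
theorem three_adic_val_factorial_inequality (n k : ℕ) (hn : 1 ≤ n) (hk : k ≤ n) :
    (Nat.factorial k).factorization 3 + (Nat.factorial (n - k)).factorization 3 +
        (Nat.factorial n).factorization 3 + (Nat.factorial (2 * n - 1)).factorization 3 ≤
      (Nat.factorial (2 * n)).factorization 3 +
        (Nat.factorial (2 * n - 2)).factorization 3 := by
  obtain ⟨m, rfl⟩ : ∃ m, n = m + 1 := ⟨n - 1, by omega⟩
  have h2n1 : 2 * (m + 1) - 1 = 2 * m + 1 := by omega
  have h2n2 : 2 * (m + 1) - 2 = 2 * m := by omega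
  rw [h2n1, h2n2]
  have fmul : ∀ a b : ℕ, a ≠ 0 → b ≠ 0 →
      (a * b).factorization 3 = a.factorization 3 + b.factorization 3 := by
    intro a b ha hb
    rw [Nat.factorization_mul ha hb]; rfl
  have fpos : ∀ a : ℕ, a.factorial ≠ 0 := fun a => (Nat.factorial_pos a).ne'
  -- A : choose
  have hA : (Nat.factorial k).factorization 3 + (Nat.factorial (m + 1 - k)).factorization 3
      ≤ (Nat.factorial (m + 1)).factorization 3 := by
    have h := Nat.choose_mul_factorial_mul_factorial hk
    have := fmul ((m+1).choose k) (k.factorial * (m+1-k).factorial)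
      (Nat.choose_pos hk).ne' (by positivity)
    rw [mul_assoc] at h
    rw [h] at this
    rw [this, fmul _ _ (fpos k) (fpos (m+1-k))]
    omega
  -- factorial recursions
  have hB : (Nat.factorial (2 * m + 2)).factorization 3 =
      ((2 * m + 2 : ℕ)).factorization 3 + ((2 * m + 1 : ℕ)).factorization 3 +
        (Nat.factorial (2 * m)).factorization 3 := by
    rw [show 2 * m + 2 = (2 * m + 1) + 1 from rfl, Nat.factorial_succ,
      fmul _ _ (by omega) (fpos _), Nat.factorial_succ, fmul _ _ (by omega) (fpos _)]
    omega
  have hB1 : (Nat.factorial (2 * m + 1)).factorization 3 =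
      ((2 * m + 1 : ℕ)).factorization 3 + (Nat.factorial (2 * m)).factorization 3 := by
    rw [Nat.factorial_succ, fmul _ _ (by omega) (fpos _)]
  have hE : (Nat.factorial (m + 1)).factorization 3 =
      ((m + 1 : ℕ)).factorization 3 + (Nat.factorial m).factorization 3 := by
    rw [Nat.factorial_succ, fmul _ _ (by omega) (fpos _)]
  -- central binomial
  have hC : (Nat.factorial (2 * m)).factorization 3 =
      (Nat.centralBinom m).factorization 3 + 2 * (Nat.factorial m).factorization 3 := by
    have h := Nat.choose_mul_factorial_mul_factorial (show m ≤ 2 * m by omega)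
    rw [show 2 * m - m = m by omega] at h
    have := fmul ((2*m).choose m) (m.factorial * m.factorial)
      (Nat.choose_pos (by omega)).ne' (by positivity)
    rw [mul_assoc] at h
    rw [h, fmul _ _ (fpos m) (fpos m)] at this
    rw [this, Nat.centralBinom]
    omega
  have hD : ((m + 1 : ℕ)).factorization 3 ≤ (Nat.centralBinom m).factorization 3 := by
    have h := Nat.succ_dvd_centralBinom m
    have := (Nat.factorization_le_iff_dvd (by omega) m.centralBinom_ne_zero).mpr h
    exact this 3
  have h2m2 : ((2 * m + 2 : ℕ)).factorization 3 = ((m + 1 : ℕ)).factorization 3 := by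
    rw [show 2 * m + 2 = 2 * (m + 1) by ring, fmul 2 (m+1) (by omega) (by omega)]
    have : (2 : ℕ).factorization 3 = 0 := by
      rw [Nat.Prime.factorization (by norm_num)]; simp
    omega
  rw [show 2 * (m + 1) = 2 * m + 2 by ring]
  omega
end

section
/- For all integers 0 ≤ k ≤ n with n ≥ 1, the rational number (2n)!·(2n-2)! / (k!·(n-k)!·n!·(2n-1)!) is an integer; indeed it equals (1/(2n-1))·C(2n,n)·C(n,k) = (4·C(2n-2,n-1) - C(2n,n))·C(n,k). -/
theorem quotient_identity_and_integrality (n k : ℕ) (hn : 1 ≤ n) (hk : k ≤ n) :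
    ((Nat.factorial (2 * n) : ℚ) * (Nat.factorial (2 * n - 2) : ℚ)) /
        ((Nat.factorial k : ℚ) * (Nat.factorial (n - k) : ℚ) * (Nat.factorial n : ℚ) *
          (Nat.factorial (2 * n - 1) : ℚ)) =
      (1 / (2 * (n : ℚ) - 1)) * (Nat.choose (2 * n) n : ℚ) * (Nat.choose n k : ℚ) ∧
    ((Nat.factorial (2 * n) : ℚ) * (Nat.factorial (2 * n - 2) : ℚ)) /
        ((Nat.factorial k : ℚ) * (Nat.factorial (n - k) : ℚ) * (Nat.factorial n : ℚ) *
          (Nat.factorial (2 * n - 1) : ℚ)) =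
      (4 * (Nat.choose (2 * n - 2) (n - 1) : ℚ) - (Nat.choose (2 * n) n : ℚ)) *
        (Nat.choose n k : ℚ) ∧
    ∃ z : ℤ,
      ((Nat.factorial (2 * n) : ℚ) * (Nat.factorial (2 * n - 2) : ℚ)) /
          ((Nat.factorial k : ℚ) * (Nat.factorial (n - k) : ℚ) * (Nat.factorial n : ℚ) *
            (Nat.factorial (2 * n - 1) : ℚ)) = z := by
  obtain ⟨m, rfl⟩ : ∃ m, n = m + 1 := ⟨n - 1, by omega⟩
  have e1 : 2 * (m + 1) - 2 = 2 * m := by omega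
  have e2 : 2 * (m + 1) - 1 = 2 * m + 1 := by omega
  have e3 : 2 * (m + 1) = 2 * m + 2 := by omega
  have e4 : m + 1 - 1 = m := by omega
  rw [e1, e2, e3, e4]
  set A : ℚ := ((2*m+2).choose (m+1) : ℚ) with hA
  set B : ℚ := ((2*m).choose m : ℚ) with hB
  set C : ℚ := ((m+1).choose k : ℚ) with hC
  have hmf : ((Nat.factorial m : ℚ)) ≠ 0 := by positivity
  have hkf : ((Nat.factorial k : ℚ)) ≠ 0 := by positivity
  have hnkf : ((Nat.factorial (m+1-k) : ℚ)) ≠ 0 := by positivity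
  have h2m1 : ((2*m+1 : ℕ) : ℚ) ≠ 0 := by positivity
  have hm1 : ((m+1 : ℕ) : ℚ) ≠ 0 := by positivity
  have F1 : ((Nat.factorial (2*m+2) : ℚ)) = A * (Nat.factorial (m+1)) * (Nat.factorial (m+1)) := by
    have := Nat.choose_mul_factorial_mul_factorial (show m+1 ≤ 2*m+2 by omega)
    rw [show 2*m+2-(m+1) = m+1 by omega] at this
    push_cast [← this]; ring
  have F2 : ((Nat.factorial (2*m) : ℚ)) = B * (Nat.factorial m) * (Nat.factorial m) := by
    have := Nat.choose_mul_factorial_mul_factorial (show m ≤ 2*m by omega)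
    rw [show 2*m-m = m by omega] at this
    push_cast [← this]; ring
  have F3 : ((Nat.factorial (m+1) : ℚ)) = C * (Nat.factorial k) * (Nat.factorial (m+1-k)) := by
    have := Nat.choose_mul_factorial_mul_factorial hk
    push_cast [← this]; ring
  have F4 : ((Nat.factorial (2*m+1) : ℚ)) = ((2*m+1 : ℕ) : ℚ) * (Nat.factorial (2*m)) := by
    rw [Nat.factorial_succ]; push_cast; ring
  have F5 : ((Nat.factorial (2*m+2) : ℚ)) = ((2*m+2 : ℕ) : ℚ) * (Nat.factorial (2*m+1)) := by
    rw [show 2*m+2 = (2*m+1)+1 by omega, Nat.factorial_succ]; push_cast; ring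
  have F6 : ((Nat.factorial (m+1) : ℚ)) = ((m+1 : ℕ) : ℚ) * (Nat.factorial m) := by
    rw [Nat.factorial_succ]; push_cast; ring
  have ha : A * ((m:ℚ)+1) = 2 * (2*(m:ℚ)+1) * B := by
    have h := F1
    rw [F5, F4, F2, F6] at h
    push_cast at h
    have h2 : (A * ((m:ℚ)+1) - 2 * (2*(m:ℚ)+1) * B) * (((m:ℚ)+1) * (Nat.factorial m : ℚ) * (Nat.factorial m : ℚ)) = 0 := by
      linear_combination -h
    rcases mul_eq_zero.1 h2 with h3 | h3
    · linarith
    · exact absurd h3 (by positivity)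
  have hm1f : ((Nat.factorial (m+1) : ℚ)) ≠ 0 := by positivity
  have hden : ((Nat.factorial k : ℚ) * (Nat.factorial (m+1-k) : ℚ) * (Nat.factorial (m+1) : ℚ) * (Nat.factorial (2*m+1) : ℚ)) ≠ 0 := by positivity
  have key : ((Nat.factorial (2*m+2) : ℚ) * (Nat.factorial (2*m) : ℚ)) /
      ((Nat.factorial k : ℚ) * (Nat.factorial (m+1-k) : ℚ) * (Nat.factorial (m+1) : ℚ) *
        (Nat.factorial (2*m+1) : ℚ)) = A * C / ((2*(m:ℚ)+1)) := by
    have h2mf : ((Nat.factorial (2*m) : ℚ)) ≠ 0 := by positivity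
    have h2m1' : (2*(m:ℚ)+1) ≠ 0 := by positivity
    rw [div_eq_div_iff hden h2m1', F1, F4, F3]
    push_cast
    ring
  refine ⟨?_, ?_, ?_⟩
  · rw [key]
    push_cast
    rw [show (2*((m:ℚ)+1)-1) = 2*(m:ℚ)+1 by ring]
    ring
  · rw [key, div_eq_iff (show (2*(m:ℚ)+1) ≠ 0 by positivity)]
    linear_combination (2*C) * ha
  · refine ⟨(4 * ((2*m).choose m : ℤ) - ((2*m+2).choose (m+1) : ℤ)) * ((m+1).choose k : ℤ), ?_⟩
    rw [key, div_eq_iff (show (2*(m:ℚ)+1) ≠ 0 by positivity)]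
    push_cast
    rw [← hA, ← hB, ← hC]
    linear_combination (2*C) * ha
end

section
/- Define A_{n,k} := C(6k,3k)·C(3k,k)·C(6(n-k),3(n-k))·C(3(n-k),n-k). For all integers n ≥ 2 and 0 ≤ k < n/2, there holds the rational identity A_{n,k}/A_{n,k+1} - 1 = (36nk + 31n - 36k² - 36k - 5)(n - 2k - 1) / ((6k+5)(6k+1)(n-k)²), and this quantity is nonnegative. -/
open Nat

lemma frec (i : ℕ) :
    ((6 * (i + 1)).choose (3 * (i + 1)) : ℚ) * ((3 * (i + 1)).choose (i + 1) : ℚ) *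
        ((i : ℚ) + 1) ^ 2 =
      12 * (6 * (i : ℚ) + 1) * (6 * (i : ℚ) + 5) *
        (((6 * i).choose (3 * i) : ℚ) * ((3 * i).choose i : ℚ)) := by
  have h1 : ((6 * (i + 1)).choose (3 * (i + 1)) : ℚ) =
      (6 * (i + 1))! / ((3 * (i + 1))! * (3 * (i + 1))!) := by
    rw [Nat.cast_choose ℚ (by omega)]; congr 4; omega
  have h2 : ((3 * (i + 1)).choose (i + 1) : ℚ) =
      (3 * (i + 1))! / ((i + 1)! * (2 * (i + 1))!) := by
    rw [Nat.cast_choose ℚ (by omega)]; congr 4; omega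
  have h3 : ((6 * i).choose (3 * i) : ℚ) = (6 * i)! / ((3 * i)! * (3 * i)!) := by
    rw [Nat.cast_choose ℚ (by omega)]; congr 4; omega
  have h4 : ((3 * i).choose i : ℚ) = (3 * i)! / (i ! * (2 * i)!) := by
    rw [Nat.cast_choose ℚ (by omega)]; congr 4; omega
  have e6 : (6 * (i + 1))! = (6 * i)! *
      ((6 * i + 1) * (6 * i + 2) * (6 * i + 3) * (6 * i + 4) * (6 * i + 5) * (6 * i + 6)) := by
    have : 6 * (i + 1) = (6 * i) + 1 + 1 + 1 + 1 + 1 + 1 := by ring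
    rw [this]; simp [Nat.factorial_succ]; ring
  have e3 : (3 * (i + 1))! = (3 * i)! * ((3 * i + 1) * (3 * i + 2) * (3 * i + 3)) := by
    have : 3 * (i + 1) = (3 * i) + 1 + 1 + 1 := by ring
    rw [this]; simp [Nat.factorial_succ]; ring
  have e2 : (2 * (i + 1))! = (2 * i)! * ((2 * i + 1) * (2 * i + 2)) := by
    have : 2 * (i + 1) = (2 * i) + 1 + 1 := by ring
    rw [this]; simp [Nat.factorial_succ]; ring
  have e1 : (i + 1)! = i ! * (i + 1) := by simp [Nat.factorial_succ]; ring
  rw [h1, h2, h3, h4, e6, e3, e2, e1]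
  have f6 : ((6 * i)! : ℚ) ≠ 0 := by positivity
  have f3 : ((3 * i)! : ℚ) ≠ 0 := by positivity
  have f2 : ((2 * i)! : ℚ) ≠ 0 := by positivity
  have f1 : ((i)! : ℚ) ≠ 0 := by positivity
  push_cast
  field_simp
  ring

theorem ratio_identity_and_nonneg (n k : ℕ) (hn : 2 ≤ n) (hk : 2 * k < n) :
    ((Nat.choose (6 * k) (3 * k) : ℚ) * (Nat.choose (3 * k) k : ℚ) *
          (Nat.choose (6 * (n - k)) (3 * (n - k)) : ℚ) *
          (Nat.choose (3 * (n - k)) (n - k) : ℚ)) /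
        ((Nat.choose (6 * (k + 1)) (3 * (k + 1)) : ℚ) *
          (Nat.choose (3 * (k + 1)) (k + 1) : ℚ) *
          (Nat.choose (6 * (n - (k + 1))) (3 * (n - (k + 1))) : ℚ) *
          (Nat.choose (3 * (n - (k + 1))) (n - (k + 1)) : ℚ)) - 1 =
      ((36 * (n : ℚ) * k + 31 * n - 36 * (k : ℚ) ^ 2 - 36 * k - 5) *
          ((n : ℚ) - 2 * k - 1)) /
        ((6 * (k : ℚ) + 5) * (6 * (k : ℚ) + 1) * ((n : ℚ) - k) ^ 2) ∧
    0 ≤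
      ((Nat.choose (6 * k) (3 * k) : ℚ) * (Nat.choose (3 * k) k : ℚ) *
          (Nat.choose (6 * (n - k)) (3 * (n - k)) : ℚ) *
          (Nat.choose (3 * (n - k)) (n - k) : ℚ)) /
        ((Nat.choose (6 * (k + 1)) (3 * (k + 1)) : ℚ) *
          (Nat.choose (3 * (k + 1)) (k + 1) : ℚ) *
          (Nat.choose (6 * (n - (k + 1))) (3 * (n - (k + 1))) : ℚ) *
          (Nat.choose (3 * (n - (k + 1))) (n - (k + 1)) : ℚ)) - 1 := by
  obtain ⟨m, hm, hkm⟩ : ∃ m, n = k + m + 1 ∧ k ≤ m := ⟨n - k - 1, by omega, by omega⟩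
  have h1 : n - k = m + 1 := by omega
  have h2 : n - (k + 1) = m := by omega
  rw [h1, h2]
  have hn' : (n : ℚ) = (k : ℚ) + m + 1 := by rw [hm]; push_cast; ring
  set Fk : ℚ := ((6 * k).choose (3 * k) : ℚ) * ((3 * k).choose k : ℚ) with hFk
  set Fk1 : ℚ := ((6 * (k + 1)).choose (3 * (k + 1)) : ℚ) * ((3 * (k + 1)).choose (k + 1) : ℚ)
  set Fm : ℚ := ((6 * m).choose (3 * m) : ℚ) * ((3 * m).choose m : ℚ)
  set Fm1 : ℚ := ((6 * (m + 1)).choose (3 * (m + 1)) : ℚ) * ((3 * (m + 1)).choose (m + 1) : ℚ)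
  have ek := frec k
  have em := frec m
  have pFk : 0 < Fk := by
    have := Nat.choose_pos (show 3 * k ≤ 6 * k by omega)
    have := Nat.choose_pos (show k ≤ 3 * k by omega)
    positivity
  have pFk1 : 0 < Fk1 := by
    have := Nat.choose_pos (show 3 * (k+1) ≤ 6 * (k+1) by omega)
    have := Nat.choose_pos (show (k+1) ≤ 3 * (k+1) by omega)
    positivity
  have pFm : 0 < Fm := by
    have := Nat.choose_pos (show 3 * m ≤ 6 * m by omega)
    have := Nat.choose_pos (show m ≤ 3 * m by omega)
    positivity
  have pFm1 : 0 < Fm1 := by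
    have := Nat.choose_pos (show 3 * (m+1) ≤ 6 * (m+1) by omega)
    have := Nat.choose_pos (show (m+1) ≤ 3 * (m+1) by omega)
    positivity
  have key : Fk * Fm1 / (Fk1 * Fm) =
      ((6 * (m : ℚ) + 1) * (6 * m + 5) * ((k : ℚ) + 1) ^ 2) /
        ((6 * (k : ℚ) + 1) * (6 * k + 5) * ((m : ℚ) + 1) ^ 2) := by
    rw [div_eq_div_iff (by positivity) (by positivity)]
    linear_combination Fk * (6 * (k:ℚ) + 1) * (6 * k + 5) * em -
      (6 * (m:ℚ) + 1) * (6 * m + 5) * Fm * ek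
  have lhs_eq : Fk * Fm1 / (Fk1 * Fm) =
      ((6 * k).choose (3 * k) : ℚ) * ((3 * k).choose k : ℚ) *
        ((6 * (m + 1)).choose (3 * (m + 1)) : ℚ) * ((3 * (m + 1)).choose (m + 1) : ℚ) /
      (((6 * (k + 1)).choose (3 * (k + 1)) : ℚ) * ((3 * (k + 1)).choose (k + 1) : ℚ) *
        ((6 * m).choose (3 * m) : ℚ) * ((3 * m).choose m : ℚ)) := by
    simp only [Fk, Fk1, Fm, Fm1]; ring
  rw [← lhs_eq, key, hn']
  constructor
  · have hnk : ((k:ℚ) + (m:ℚ) + 1 - (k:ℚ)) = (m:ℚ) + 1 := by ring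
    rw [div_sub' (by positivity), div_eq_div_iff (by positivity)
      (by rw [hnk]; positivity)]
    ring
  · have hkm' : (k : ℚ) ≤ m := by exact_mod_cast hkm
    have h0 : (0:ℚ) ≤ k := by positivity
    rw [sub_nonneg, le_div_iff₀ (by positivity), one_mul]
    have hd : (0:ℚ) ≤ (36*(k:ℚ)*m + 31*k + 31*m + 26) * ((m:ℚ) - k) :=
      mul_nonneg (by nlinarith) (by linarith)
    have hexp : (6 * (m:ℚ) + 1) * (6 * m + 5) * ((k:ℚ) + 1) ^ 2 -
        (6 * (k:ℚ) + 1) * (6 * k + 5) * ((m:ℚ) + 1) ^ 2 =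
        (36*(k:ℚ)*m + 31*k + 31*m + 26) * ((m:ℚ) - k) := by ring
    linarith
end

section
/- For all nonnegative integers a and b, the super Catalan number (2a)!·(2b)! / (a!·b!·(a+b)!) is an integer. -/
lemma key_div (n x y : ℕ) : x / n + y / n + (x + y) / n ≤ 2 * x / n + 2 * y / n := by
  rcases Nat.eq_zero_or_pos n with rfl | hn
  · simp
  · rw [Nat.add_div hn (a := x) (b := y), two_mul x, two_mul y,
      Nat.add_div hn (a := x) (b := x), Nat.add_div hn (a := y) (b := y)]
    have hx := Nat.mod_lt x hn
    have hy := Nat.mod_lt y hn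
    split_ifs <;> omega

theorem super_catalan_integer (a b : ℕ) :
    (Nat.factorial a * Nat.factorial b * Nat.factorial (a + b)) ∣
      (Nat.factorial (2 * a) * Nat.factorial (2 * b)) := by
  have hfa := Nat.factorial_ne_zero a
  have hfb := Nat.factorial_ne_zero b
  have hfab := Nat.factorial_ne_zero (a + b)
  have hf2a := Nat.factorial_ne_zero (2 * a)
  have hf2b := Nat.factorial_ne_zero (2 * b)
  rw [← Nat.factorization_le_iff_dvd (by positivity) (by positivity)]
  intro p
  by_cases hp : p.Prime
  · haveI : Fact p.Prime := ⟨hp⟩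
    simp only [Nat.factorization_mul (mul_ne_zero hfa hfb) hfab,
      Nat.factorization_mul hfa hfb, Nat.factorization_mul hf2a hf2b,
      Finsupp.coe_add, Pi.add_apply]
    rw [Nat.factorization_def _ hp, Nat.factorization_def _ hp, Nat.factorization_def _ hp,
      Nat.factorization_def _ hp, Nat.factorization_def _ hp]
    set B := Nat.log p (2 * (a + b)) + 1 with hB
    have hmono : ∀ m, m ≤ 2 * (a + b) → Nat.log p m < B := fun m hm =>
      Nat.lt_succ_of_le (Nat.log_mono_right hm)
    rw [padicValNat_factorial (hmono a (by omega)), padicValNat_factorial (hmono b (by omega)),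
      padicValNat_factorial (hmono (a + b) (by omega)),
      padicValNat_factorial (hmono (2 * a) (by omega)),
      padicValNat_factorial (hmono (2 * b) (by omega))]
    rw [← Finset.sum_add_distrib, ← Finset.sum_add_distrib, ← Finset.sum_add_distrib]
    exact Finset.sum_le_sum fun i _ => key_div (p ^ i) a b
  · simp [Nat.factorization_eq_zero_of_not_prime _ hp]
end
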